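/- arXiv:1903.05527 — 8 statements merged into one kernel-verified Lean document; each statement's English description precedes it below -/
import Mathlib

section
/- Let Σ ≥ 1 be a natural number and let x, y be unit vectors in a finite-dimensional real inner product space with x ≠ −y. Then ∫_0^∞ ∫_0^∞ λ^{Σ−1} μ^{Σ−1} e^{−‖λx + μy‖²/2} dλ dμ = 2^{Σ−1} Γ(Σ) · ∫_0^{π/2} (cos θ · sin θ)^{Σ−1} / ‖cos θ · x + sin θ · y‖^{2Σ} dθ, where Γ is the real Gamma function. (The paper applies this with x, y unit-norm rank-1 tensors and Σ the dimension of the Segre manifold.) -/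
/-!
Pass to polar coordinates `(λ, μ) = (r cos θ, r sin θ)` on the open quadrant. With
`u_θ = cos θ • x + sin θ • y`, the integrand times the Jacobian `r` is
`(cos θ sin θ)^{Σ-1} r^{2Σ-1} e^{-r² ‖u_θ‖² / 2}`, and `u_θ ≠ 0` because `‖x‖ = ‖y‖` and
`x ≠ -y`. The radial integral is a Gamma integral,
`∫_0^∞ r^{2Σ-1} e^{-b r²} dr = Γ(Σ) / (2 b^Σ)`, which for `b = ‖u_θ‖² / 2` is
`2^{Σ-1} Γ(Σ) / ‖u_θ‖^{2Σ}`.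
-/

open MeasureTheory Real Set
open scoped ENNReal

theorem smul_add_smul_ne_zero_of_norm_eq {E : Type*} [NormedAddCommGroup E] [NormedSpace ℝ E]
    {x y : E} (hxy : ‖x‖ = ‖y‖) (hne : x ≠ -y) {a b : ℝ} (ha : 0 < a) (hb : 0 < b) :
    a • x + b • y ≠ 0 := by
  intro h
  have hx : x ≠ 0 := by
    rintro rfl
    exact hne (by rw [norm_zero, eq_comm, norm_eq_zero] at hxy; simp [hxy])
  have hab : a = b := by
    have := congrArg norm (eq_neg_of_add_eq_zero_left h)
    rw [norm_neg, norm_smul, norm_smul, ← hxy, Real.norm_of_nonneg ha.le,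
      Real.norm_of_nonneg hb.le] at this
    exact mul_right_cancel₀ (norm_ne_zero_iff.mpr hx) this
  rw [hab, ← smul_add, smul_eq_zero] at h
  exact hne (eq_neg_of_add_eq_zero_left (h.resolve_left hb.ne'))

theorem polarCoord_target_inter_preimage_quadrant :
    polarCoord.target ∩ polarCoord.symm ⁻¹' (Ioi 0 ×ˢ Ioi 0) = Ioi 0 ×ˢ Ioo 0 (π / 2) := by
  ext ⟨r, θ⟩
  simp only [polarCoord_target, polarCoord_symm_apply, mem_inter_iff, mem_prod, mem_Ioi, mem_Ioo,
    mem_preimage]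
  constructor
  · rintro ⟨⟨hr, hθ₁, hθ₂⟩, hcos, hsin⟩
    refine ⟨hr, ?_, ?_⟩
    · by_contra! h
      exact (mul_pos_iff_of_pos_left hr).mp hsin |>.not_ge
        (sin_nonpos_of_nonpos_of_neg_pi_le h hθ₁.le)
    · by_contra! h
      exact (mul_pos_iff_of_pos_left hr).mp hcos |>.not_ge
        (cos_nonpos_of_pi_div_two_le_of_le h (by linarith))
  · rintro ⟨hr, hθ₁, hθ₂⟩
    refine ⟨⟨hr, by linarith [pi_pos], by linarith [pi_pos]⟩, mul_pos hr ?_, mul_pos hr ?_⟩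
    · exact cos_pos_of_mem_Ioo ⟨by linarith, hθ₂⟩
    · exact sin_pos_of_pos_of_lt_pi hθ₁ (by linarith [pi_pos])

theorem polarCoord_symm_image_quadrant :
    polarCoord.symm '' (Ioi 0 ×ˢ Ioo 0 (π / 2)) = Ioi 0 ×ˢ Ioi 0 := by
  rw [← polarCoord_target_inter_preimage_quadrant, image_inter_preimage,
    polarCoord.symm_image_target_eq_source, inter_eq_right]
  exact fun p hp => Or.inl hp.1

theorem lintegral_quadrant_eq_lintegral_polarCoord (f : ℝ → ℝ → ℝ≥0∞)
    (hf : Measurable (Function.uncurry f)) :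
    ∫⁻ a in Ioi (0 : ℝ), ∫⁻ b in Ioi (0 : ℝ), f a b =
      ∫⁻ θ in Ioo 0 (π / 2), ∫⁻ r in Ioi (0 : ℝ), ENNReal.ofReal r * f (r * cos θ) (r * sin θ) := by
  have hS : MeasurableSet (Ioi (0 : ℝ) ×ˢ Ioo 0 (π / 2)) :=
    measurableSet_Ioi.prod measurableSet_Ioo
  calc ∫⁻ a in Ioi (0 : ℝ), ∫⁻ b in Ioi (0 : ℝ), f a b
      = ∫⁻ p in polarCoord.symm '' (Ioi 0 ×ˢ Ioo 0 (π / 2)), Function.uncurry f p := by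
        rw [polarCoord_symm_image_quadrant, Measure.volume_eq_prod, ← Measure.prod_restrict,
          lintegral_prod _ hf.aemeasurable]
        rfl
    _ = ∫⁻ p in Ioi 0 ×ˢ Ioo 0 (π / 2),
          ENNReal.ofReal p.1 * f (p.1 * cos p.2) (p.1 * sin p.2) := by
        rw [lintegral_image_eq_lintegral_abs_det_fderiv_mul volume hS
          (fun p _ => (hasFDerivAt_polarCoord_symm p).hasFDerivWithinAt)
          (polarCoord.symm.injOn.mono (prod_mono_right (Ioo_subset_Ioo
            (by linarith [pi_pos]) (by linarith [pi_pos]))))]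
        refine setLIntegral_congr_fun hS fun p hp => ?_
        rw [det_fderivPolarCoordSymm, abs_of_pos hp.1, polarCoord_symm_apply,
          Function.uncurry_apply_pair]
    _ = _ := by
        rw [Measure.volume_eq_prod, ← Measure.prod_restrict]
        exact lintegral_prod_symm _ (by fun_prop)

theorem integral_pow_mul_exp_neg_mul_sq (n : ℕ) {b : ℝ} (hb : 0 < b) :
    ∫ r in Ioi (0 : ℝ), r ^ (2 * n + 1) * exp (-b * r ^ 2) = Gamma (n + 1) / (2 * b ^ (n + 1)) := by
  have hq : (-1 : ℝ) < 2 * n + 1 := by linarith [n.cast_nonneg (α := ℝ)]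
  have h := integral_rpow_mul_exp_neg_mul_rpow two_pos hq hb
  rw [show -(2 * (n : ℝ) + 1 + 1) / 2 = -(n + 1 : ℕ) by push_cast; ring,
    show (2 * (n : ℝ) + 1 + 1) / 2 = n + 1 by ring, rpow_neg hb.le, rpow_natCast] at h
  convert h using 1
  · norm_cast
  · field_simp

theorem lintegral_pow_mul_exp_neg_norm_smul_sq {E : Type*} [NormedAddCommGroup E]
    [NormedSpace ℝ E] (n : ℕ) {u : E} (hu : u ≠ 0) :
    ∫⁻ r in Ioi (0 : ℝ), ENNReal.ofReal (r ^ (2 * n + 1) * exp (-‖r • u‖ ^ 2 / 2)) =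
      ENNReal.ofReal (2 ^ n * Gamma (n + 1) / ‖u‖ ^ (2 * (n + 1))) := by
  have hb : 0 < ‖u‖ ^ 2 / 2 := by have := norm_pos_iff.mpr hu; positivity
  have hnorm : ∀ r ∈ Ioi (0 : ℝ), r ^ (2 * n + 1) * exp (-‖r • u‖ ^ 2 / 2) =
      r ^ (2 * n + 1) * exp (-(‖u‖ ^ 2 / 2) * r ^ 2) := fun r hr => by
    rw [norm_smul, norm_of_nonneg (le_of_lt hr)]; ring_nf
  rw [setLIntegral_congr_fun measurableSet_Ioi fun r hr => congrArg _ (hnorm r hr),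
    ← ofReal_integral_eq_lintegral_ofReal, integral_pow_mul_exp_neg_mul_sq n hb]
  · congr 1
    rw [div_pow, pow_mul, pow_succ 2 n]
    field_simp
  · have hs : (-1 : ℝ) < 2 * n + 1 := by linarith [n.cast_nonneg (α := ℝ)]
    exact (integrableOn_rpow_mul_exp_neg_mul_sq hb hs).congr_fun (fun r _ => by norm_cast)
      measurableSet_Ioi
  · exact ae_restrict_of_forall_mem measurableSet_Ioi fun r (hr : 0 < r) => by positivity

theorem lintegral_Ioi_polar_gaussian {E : Type*} [NormedAddCommGroup E] [NormedSpace ℝ E]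
    (n : ℕ) {x y : E} {a b : ℝ} (ha : 0 ≤ a) (hb : 0 ≤ b) (hu : a • x + b • y ≠ 0) :
    ∫⁻ r in Ioi (0 : ℝ), ENNReal.ofReal r *
        ENNReal.ofReal ((r * a) ^ n * (r * b) ^ n * exp (-‖(r * a) • x + (r * b) • y‖ ^ 2 / 2)) =
      ENNReal.ofReal (2 ^ n * Gamma (n + 1)) *
        ENNReal.ofReal ((a * b) ^ n / ‖a • x + b • y‖ ^ (2 * (n + 1))) := by
  have hfactor : ∀ r ∈ Ioi (0 : ℝ), ENNReal.ofReal r *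
      ENNReal.ofReal ((r * a) ^ n * (r * b) ^ n * exp (-‖(r * a) • x + (r * b) • y‖ ^ 2 / 2)) =
      ENNReal.ofReal ((a * b) ^ n) *
        ENNReal.ofReal (r ^ (2 * n + 1) * exp (-‖r • (a • x + b • y)‖ ^ 2 / 2)) := by
    intro r (hr : 0 < r)
    rw [← ENNReal.ofReal_mul hr.le, ← ENNReal.ofReal_mul (by positivity), smul_add, smul_smul,
      smul_smul]
    ring_nf
  have hG : 0 ≤ 2 ^ n * Gamma (n + 1) := by positivity
  rw [setLIntegral_congr_fun measurableSet_Ioi hfactor,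
    lintegral_const_mul' _ _ ENNReal.ofReal_ne_top, lintegral_pow_mul_exp_neg_norm_smul_sq n hu,
    ← ENNReal.ofReal_mul (by positivity), ← ENNReal.ofReal_mul hG]
  ring_nf

theorem polar_integral_identity_general {E : Type*} [NormedAddCommGroup E] [InnerProductSpace ℝ E]
    (S : ℕ) (hS : 1 ≤ S) (x y : E) (hx : ‖x‖ = 1) (hy : ‖y‖ = 1) (hxy : x ≠ -y) :
    (∫⁻ l in Set.Ioi (0 : ℝ), ∫⁻ m in Set.Ioi (0 : ℝ),
        ENNReal.ofReal (l ^ (S - 1) * m ^ (S - 1) * Real.exp (-‖l • x + m • y‖ ^ 2 / 2)))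
      = ENNReal.ofReal ((2 : ℝ) ^ (S - 1) * Real.Gamma (S : ℝ)) *
        ∫⁻ θ in Set.Ioc (0 : ℝ) (π / 2),
          ENNReal.ofReal ((Real.cos θ * Real.sin θ) ^ (S - 1) /
            ‖Real.cos θ • x + Real.sin θ • y‖ ^ (2 * S)) := by
  obtain ⟨n, rfl⟩ : ∃ n, S = n + 1 := ⟨S - 1, by omega⟩
  simp only [Nat.add_sub_cancel, Nat.cast_add_one]
  rw [lintegral_quadrant_eq_lintegral_polarCoord _ (by fun_prop),
    setLIntegral_congr Ioo_ae_eq_Ioc.symm, ← lintegral_const_mul' _ _ ENNReal.ofReal_ne_top]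
  refine setLIntegral_congr_fun measurableSet_Ioo fun θ ⟨hθ₀, hθ⟩ => ?_
  have hcos : 0 < cos θ := cos_pos_of_mem_Ioo ⟨by linarith, hθ⟩
  have hsin : 0 < sin θ := sin_pos_of_pos_of_lt_pi hθ₀ (by linarith [pi_pos])
  exact lintegral_Ioi_polar_gaussian n hcos.le hsin.le
    (smul_add_smul_ne_zero_of_norm_eq (hx.trans hy.symm) hxy hcos hsin)

/-- Lemma 3.1 of the paper: for unit vectors `x, y` in a finite-dimensional real inner
product space with `x ≠ -y`, and `Σ ≥ 1`,
`∫_0^∞ ∫_0^∞ λ^{Σ-1} μ^{Σ-1} e^{-‖λx+μy‖²/2} dλ dμ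
  = 2^{Σ-1} Γ(Σ) ∫_0^{π/2} (cos θ sin θ)^{Σ-1} / ‖cos θ · x + sin θ · y‖^{2Σ} dθ`. -/
theorem polar_integral_identity {E : Type*} [NormedAddCommGroup E] [InnerProductSpace ℝ E]
    [FiniteDimensional ℝ E]
    (S : ℕ) (hS : 1 ≤ S) (x y : E) (hx : ‖x‖ = 1) (hy : ‖y‖ = 1) (hxy : x ≠ -y) :
    (∫⁻ l in Set.Ioi (0 : ℝ), ∫⁻ m in Set.Ioi (0 : ℝ),
        ENNReal.ofReal (l ^ (S - 1) * m ^ (S - 1) * Real.exp (-‖l • x + m • y‖ ^ 2 / 2)))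
      = ENNReal.ofReal ((2 : ℝ) ^ (S - 1) * Real.Gamma (S : ℝ)) *
        ∫⁻ θ in Set.Ioc (0 : ℝ) (π / 2),
          ENNReal.ofReal ((Real.cos θ * Real.sin θ) ^ (S - 1) /
            ‖Real.cos θ • x + Real.sin θ • y‖ ^ (2 * S)) :=
  polar_integral_identity_general S hS x y hx hy hxy
end

section
/- Let p ≥ 1 be an integer and s ≥ 1 a real number. There exists a constant k > 0, depending only on p and s, such that for all unit vectors x, y ∈ ℝ^p with x ≠ −y: ∫_0^{π/2} (cos θ · sin θ)^{s−1} / ‖cos θ · x + sin θ · y‖^{2s} dθ ≥ k / ‖x + y‖^{2s−1}. -/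
open Real Set MeasureTheory

/-!
Write `n = ‖x + y‖`. For unit vectors, `‖cos θ • x + sin θ • y‖² = (1 - sin 2θ) + sin 2θ · n² / 2`,
and `1 - sin 2θ ≤ 2 (θ - π/4)²`. Hence on the window `π/4 ≤ θ ≤ π/4 + n/4` the denominator is at
most `n^{2s}` while `cos θ sin θ ≥ 1/4`, so the integral is at least
`(n/4) · (1/4)^{s-1} / n^{2s} = (1/4)^s / n^{2s-1}`.
-/

lemma Real.one_sub_sin_two_mul_le (θ : ℝ) : 1 - sin (2 * θ) ≤ 2 * (θ - π / 4) ^ 2 := by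
  have h : sin (2 * θ) = cos (2 * (θ - π / 4)) := by
    rw [show 2 * (θ - π / 4) = -(π / 2 - 2 * θ) by ring, cos_neg, cos_pi_div_two_sub]
  nlinarith [one_sub_sq_div_two_le_cos (x := 2 * (θ - π / 4))]

lemma Real.quarter_le_cos_mul_sin {θ : ℝ} (hθ : |θ - π / 4| ≤ 1 / 2) :
    1 / 4 ≤ cos θ * sin θ := by
  have hsq : (θ - π / 4) ^ 2 ≤ (1 / 2) ^ 2 := by
    rw [← sq_abs]; exact pow_le_pow_left₀ (abs_nonneg _) hθ 2
  have := one_sub_sin_two_mul_le θ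
  rw [sin_two_mul] at this
  linarith

section UnitVectors

variable {E : Type*} [NormedAddCommGroup E] [InnerProductSpace ℝ E] {x y : E}

lemma norm_cos_smul_add_sin_smul_sq (hx : ‖x‖ = 1) (hy : ‖y‖ = 1) (θ : ℝ) :
    ‖cos θ • x + sin θ • y‖ ^ 2 = (1 - sin (2 * θ)) + sin (2 * θ) * (‖x + y‖ ^ 2 / 2) := by
  rw [norm_add_sq_real, norm_add_sq_real, real_inner_smul_left, real_inner_smul_right,
    norm_smul, norm_smul, hx, hy, sin_two_mul]
  simp only [norm_eq_abs, mul_one, sq_abs]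
  linear_combination sin_sq_add_cos_sq θ

lemma norm_cos_smul_add_sin_smul_pos (hx : ‖x‖ = 1) (hy : ‖y‖ = 1) (hxy : x ≠ -y) {θ : ℝ}
    (hθ : θ ∈ Icc 0 (π / 2)) : 0 < ‖cos θ • x + sin θ • y‖ := by
  have hn : 0 < ‖x + y‖ := norm_pos_iff.mpr fun h => hxy (add_eq_zero_iff_eq_neg.mp h)
  have hsin₀ : 0 ≤ sin (2 * θ) :=
    sin_nonneg_of_nonneg_of_le_pi (by linarith [hθ.1]) (by linarith [hθ.2])
  have hsin₁ : sin (2 * θ) ≤ 1 := sin_le_one _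
  have hsq : 0 < ‖cos θ • x + sin θ • y‖ ^ 2 := by
    rw [norm_cos_smul_add_sin_smul_sq hx hy]
    rcases hsin₁.lt_or_eq with hlt | heq
    · nlinarith [mul_nonneg hsin₀ (sq_nonneg ‖x + y‖)]
    · rw [heq]; positivity
  exact (norm_nonneg _).lt_of_ne' (sq_pos_iff.mp hsq)

lemma norm_cos_smul_add_sin_smul_le (hx : ‖x‖ = 1) (hy : ‖y‖ = 1) {θ : ℝ}
    (hθ : |θ - π / 4| ≤ ‖x + y‖ / 2) : ‖cos θ • x + sin θ • y‖ ≤ ‖x + y‖ := by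
  have hwindow : (θ - π / 4) ^ 2 ≤ (‖x + y‖ / 2) ^ 2 := by
    rw [← sq_abs]; exact pow_le_pow_left₀ (abs_nonneg _) hθ 2
  refine (pow_le_pow_iff_left₀ (norm_nonneg _) (norm_nonneg _) two_ne_zero).mp ?_
  rw [norm_cos_smul_add_sin_smul_sq hx hy]
  nlinarith [Real.one_sub_sin_two_mul_le θ, sin_le_one (2 * θ), sq_nonneg ‖x + y‖]

lemma intervalIntegrable_cos_mul_sin_rpow_div_norm_rpow {s : ℝ} (hs : 1 ≤ s) (hx : ‖x‖ = 1)
    (hy : ‖y‖ = 1) (hxy : x ≠ -y) :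
    IntervalIntegrable (fun θ => (cos θ * sin θ) ^ (s - 1) / ‖cos θ • x + sin θ • y‖ ^ (2 * s))
      volume 0 (π / 2) := by
  refine ContinuousOn.intervalIntegrable_of_Icc (by positivity) (ContinuousOn.div ?_ ?_ ?_)
  · exact ((continuous_cos.mul continuous_sin).rpow_const
      fun _ => Or.inr (by linarith)).continuousOn
  · exact (((continuous_cos.smul continuous_const).add (continuous_sin.smul continuous_const)).norm
      |>.rpow_const fun _ => Or.inr (by linarith)).continuousOn
  · exact fun θ hθ => (rpow_pos_of_pos (norm_cos_smul_add_sin_smul_pos hx hy hxy hθ) _).ne'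

lemma rpow_div_norm_add_rpow_le_cos_mul_sin_rpow_div {s : ℝ} (hs : 1 ≤ s) (hx : ‖x‖ = 1)
    (hy : ‖y‖ = 1) (hxy : x ≠ -y) {θ : ℝ} (hθ : θ ∈ Icc (π / 4) (π / 4 + ‖x + y‖ / 4)) :
    (1 / 4) ^ (s - 1) / ‖x + y‖ ^ (2 * s) ≤
      (cos θ * sin θ) ^ (s - 1) / ‖cos θ • x + sin θ • y‖ ^ (2 * s) := by
  have hn₂ : ‖x + y‖ ≤ 2 := by linarith [norm_add_le x y]
  have hdist : |θ - π / 4| ≤ ‖x + y‖ / 4 :=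
    abs_le.mpr ⟨by linarith [hθ.1, norm_nonneg (x + y)], by linarith [hθ.2]⟩
  have hθ' : θ ∈ Icc 0 (π / 2) := ⟨by linarith [hθ.1, pi_pos], by linarith [hθ.2, pi_gt_three]⟩
  have hcs := quarter_le_cos_mul_sin (hdist.trans (by linarith))
  refine div_le_div₀ (by positivity) (rpow_le_rpow (by norm_num) hcs (by linarith))
    (rpow_pos_of_pos (norm_cos_smul_add_sin_smul_pos hx hy hxy hθ') _)
    (rpow_le_rpow (norm_nonneg _) (norm_cos_smul_add_sin_smul_le hx hy ?_) (by linarith))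
  linarith [hdist, norm_nonneg (x + y)]

lemma quarter_rpow_div_norm_add_rpow_le_integral {s : ℝ} (hs : 1 ≤ s) (hx : ‖x‖ = 1)
    (hy : ‖y‖ = 1) (hxy : x ≠ -y) :
    (1 / 4) ^ s / ‖x + y‖ ^ (2 * s - 1) ≤
      ∫ θ in (0 : ℝ)..(π / 2), (cos θ * sin θ) ^ (s - 1) / ‖cos θ • x + sin θ • y‖ ^ (2 * s) := by
  have hn : 0 < ‖x + y‖ := norm_pos_iff.mpr fun h => hxy (add_eq_zero_iff_eq_neg.mp h)
  have hwindow : π / 4 + ‖x + y‖ / 4 ≤ π / 2 := by linarith [norm_add_le x y, pi_gt_three]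
  have hint := intervalIntegrable_cos_mul_sin_rpow_div_norm_rpow hs hx hy hxy
  calc (1 / 4) ^ s / ‖x + y‖ ^ (2 * s - 1)
      = (π / 4 + ‖x + y‖ / 4 - π / 4) * ((1 / 4) ^ (s - 1) / ‖x + y‖ ^ (2 * s)) := by
        rw [rpow_sub_one hn.ne', rpow_sub_one (by norm_num : (1 / 4 : ℝ) ≠ 0)]
        field_simp
        ring
    _ = ∫ _ in (π / 4)..(π / 4 + ‖x + y‖ / 4), (1 / 4) ^ (s - 1) / ‖x + y‖ ^ (2 * s) := by
        rw [intervalIntegral.integral_const, smul_eq_mul]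
    _ ≤ ∫ θ in (π / 4)..(π / 4 + ‖x + y‖ / 4),
          (cos θ * sin θ) ^ (s - 1) / ‖cos θ • x + sin θ • y‖ ^ (2 * s) := by
        refine intervalIntegral.integral_mono_on (by linarith) intervalIntegrable_const
          (hint.mono_set ?_) fun _ hθ =>
            rpow_div_norm_add_rpow_le_cos_mul_sin_rpow_div hs hx hy hxy hθ
        rw [uIcc_of_le (by linarith), uIcc_of_le (by positivity)]
        exact Icc_subset_Icc (by positivity) hwindow
    _ ≤ ∫ θ in (0 : ℝ)..(π / 2),
          (cos θ * sin θ) ^ (s - 1) / ‖cos θ • x + sin θ • y‖ ^ (2 * s) := by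
        refine intervalIntegral.integral_mono_interval (by positivity) (by linarith) hwindow
          (ae_restrict_of_forall_mem measurableSet_Ioc fun θ hθ => ?_) hint
        have hcos : 0 ≤ cos θ := cos_nonneg_of_mem_Icc ⟨by linarith [hθ.1, pi_pos], hθ.2⟩
        have hsin : 0 ≤ sin θ := sin_nonneg_of_nonneg_of_le_pi hθ.1.le (by linarith [hθ.2])
        positivity

end UnitVectors

theorem lower_bound_integral_general (p : ℕ) (s : ℝ) (hs : 1 ≤ s) :
    ∃ k > (0 : ℝ), ∀ x y : EuclideanSpace ℝ (Fin p), ‖x‖ = 1 → ‖y‖ = 1 → x ≠ -y →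
      k / ‖x + y‖ ^ (2 * s - 1) ≤
        ∫ θ in (0 : ℝ)..(π / 2),
          (Real.cos θ * Real.sin θ) ^ (s - 1) /
            ‖Real.cos θ • x + Real.sin θ • y‖ ^ (2 * s) :=
  ⟨(1 / 4) ^ s, by positivity, fun _ _ hx hy hxy =>
    quarter_rpow_div_norm_add_rpow_le_integral hs hx hy hxy⟩

/-- Lemma 3.2 of the paper: for all unit vectors `x, y ∈ ℝᵖ` with `x ≠ -y` and `s ≥ 1`,
there is a constant `k = k(p, s) > 0` such that
`∫_0^{π/2} (cos θ sin θ)^{s-1} / ‖cos θ · x + sin θ · y‖^{2s} dθ ≥ k / ‖x + y‖^{2s-1}`. -/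
theorem lower_bound_integral (p : ℕ) (hp : 1 ≤ p) (s : ℝ) (hs : 1 ≤ s) :
    ∃ k > (0 : ℝ), ∀ x y : EuclideanSpace ℝ (Fin p), ‖x‖ = 1 → ‖y‖ = 1 → x ≠ -y →
      k / ‖x + y‖ ^ (2 * s - 1) ≤
        ∫ θ in (0 : ℝ)..(π / 2),
          (Real.cos θ * Real.sin θ) ^ (s - 1) /
            ‖Real.cos θ • x + Real.sin θ • y‖ ^ (2 * s) :=
  lower_bound_integral_general p s hs
end

section
/- Let d ≥ 1 and n₁,…,n_d ≥ 2. Let u^1,…,u^d and v^1,…,v^d be unit vectors with u^k, v^k ∈ ℝ^{n_k}, and suppose that for every k both ‖u^k − v^k‖ ≤ ‖u^1 − v^1‖ and ⟨u^k, v^k⟩ ≥ 0 hold. Then ‖u^1 − v^1‖ ≤ ‖u^1 ⊗ ⋯ ⊗ u^d − v^1 ⊗ ⋯ ⊗ v^d‖ ≤ d · ‖u^1 − v^1‖, where the middle norm is the Euclidean norm of the difference of the two rank-1 tensors. -/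
open scoped RealInnerProductSpace

/-- The rank-1 tensor `u^1 ⊗ ⋯ ⊗ u^d`, as an element of the Euclidean space of
real-valued functions on `Fin n₁ × ⋯ × Fin n_d`. -/
noncomputable def rankOne {d : ℕ} {n : Fin d → ℕ}
    (u : ∀ k, EuclideanSpace ℝ (Fin (n k))) :
    EuclideanSpace ℝ (∀ k, Fin (n k)) :=
  (WithLp.equiv 2 _).symm fun i => ∏ k, u k (i k)

lemma inner_rankOne {d : ℕ} {n : Fin d → ℕ}
    (u v : ∀ k, EuclideanSpace ℝ (Fin (n k))) :
    ⟪rankOne u, rankOne v⟫ = ∏ k, ⟪u k, v k⟫ := by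
  simp only [rankOne, PiLp.inner_apply, RCLike.inner_apply, conj_trivial]
  rw [Finset.prod_univ_sum]
  simp [WithLp.equiv, Finset.prod_mul_distrib]

lemma one_sub_prod_le_sum {ι : Type*} [DecidableEq ι] (s : Finset ι) (c : ι → ℝ)
    (h0 : ∀ i ∈ s, 0 ≤ c i) (h1 : ∀ i ∈ s, c i ≤ 1) :
    1 - ∏ i ∈ s, c i ≤ ∑ i ∈ s, (1 - c i) := by
  induction s using Finset.induction with
  | empty => simp
  | @insert a s' hx ih =>
    rw [Finset.prod_insert hx, Finset.sum_insert hx]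
    have hp0 : 0 ≤ ∏ i ∈ s', c i := Finset.prod_nonneg fun i hi => h0 i (Finset.mem_insert_of_mem hi)
    have hp1 : ∏ i ∈ s', c i ≤ 1 := Finset.prod_le_one (fun i hi => h0 i (Finset.mem_insert_of_mem hi)) (fun i hi => h1 i (Finset.mem_insert_of_mem hi))
    have := ih (fun i hi => h0 i (Finset.mem_insert_of_mem hi)) (fun i hi => h1 i (Finset.mem_insert_of_mem hi))
    nlinarith [h0 a (Finset.mem_insert_self a s'), h1 a (Finset.mem_insert_self a s')]

/-- Lemma 3.3 of the paper: for unit vectors `u^k, v^k` with `‖u^k - v^k‖ ≤ ‖u^1 - v^1‖`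
and `⟨u^k, v^k⟩ ≥ 0` for all `k`,
`‖u^1 - v^1‖ ≤ ‖u^1 ⊗ ⋯ ⊗ u^d - v^1 ⊗ ⋯ ⊗ v^d‖ ≤ d ‖u^1 - v^1‖`. -/
theorem norm_tprod_sub_tprod_bounds (d : ℕ) (hd : 0 < d) (n : Fin d → ℕ)
    (hn : ∀ k, 2 ≤ n k)
    (u v : ∀ k, EuclideanSpace ℝ (Fin (n k)))
    (hu : ∀ k, ‖u k‖ = 1) (hv : ∀ k, ‖v k‖ = 1)
    (hle : ∀ k, ‖u k - v k‖ ≤ ‖u ⟨0, hd⟩ - v ⟨0, hd⟩‖)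
    (hinner : ∀ k, 0 ≤ ⟪u k, v k⟫) :
    ‖u ⟨0, hd⟩ - v ⟨0, hd⟩‖ ≤ ‖rankOne u - rankOne v‖ ∧
      ‖rankOne u - rankOne v‖ ≤ (d : ℝ) * ‖u ⟨0, hd⟩ - v ⟨0, hd⟩‖ := by
  set z : Fin d := ⟨0, hd⟩
  set c : Fin d → ℝ := fun k => ⟪u k, v k⟫ with hc
  set P : ℝ := ∏ k, c k with hP
  have hc1 : ∀ k, c k ≤ 1 := fun k => by
    calc c k ≤ ‖u k‖ * ‖v k‖ := real_inner_le_norm _ _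
    _ = 1 := by rw [hu, hv]; ring
  have hc0 : ∀ k, 0 ≤ c k := hinner
  -- norms squared
  have hNk : ∀ k, ‖u k - v k‖ ^ 2 = 2 - 2 * c k := fun k => by
    rw [norm_sub_sq_real, hu, hv, hc]; ring
  have huu : ‖rankOne u‖ ^ 2 = 1 := by
    rw [← real_inner_self_eq_norm_sq, inner_rankOne]
    rw [Finset.prod_eq_one]
    intro k _
    rw [real_inner_self_eq_norm_sq, hu]; norm_num
  have hvv : ‖rankOne v‖ ^ 2 = 1 := by
    rw [← real_inner_self_eq_norm_sq, inner_rankOne]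
    rw [Finset.prod_eq_one]
    intro k _
    rw [real_inner_self_eq_norm_sq, hv]; norm_num
  have hT : ‖rankOne u - rankOne v‖ ^ 2 = 2 - 2 * P := by
    rw [norm_sub_sq_real, huu, hvv, inner_rankOne]; ring
  set N : ℝ := ‖u z - v z‖ with hNdef
  set T : ℝ := ‖rankOne u - rankOne v‖ with hTdef
  have hN : N ^ 2 = 2 - 2 * c z := hNk z
  have hN0 : 0 ≤ N := norm_nonneg _
  have hT0 : 0 ≤ T := norm_nonneg _
  -- P ≤ c z
  have hPle : P ≤ c z := by
    rw [hP, ← Finset.mul_prod_erase Finset.univ c (Finset.mem_univ z)]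
    exact mul_le_of_le_one_right (hc0 z)
      (Finset.prod_le_one (fun i _ => hc0 i) (fun i _ => hc1 i))
  constructor
  · -- lower bound
    have hsq : N ^ 2 ≤ T ^ 2 := by rw [hN, hT]; linarith
    nlinarith
  · -- upper bound
    have key : 1 - P ≤ ∑ k, (1 - c k) :=
      one_sub_prod_le_sum Finset.univ c (fun i _ => hc0 i) (fun i _ => hc1 i)
    have hterm : ∀ k, 1 - c k ≤ N ^ 2 / 2 := fun k => by
      have := pow_le_pow_left₀ (norm_nonneg (u k - v k)) (hle k) 2
      rw [hNk k] at this
      rw [hN] at this ⊢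
      linarith
    have hsum : ∑ k : Fin d, (1 - c k) ≤ (d : ℝ) * (N ^ 2 / 2) := by
      calc ∑ k : Fin d, (1 - c k) ≤ ∑ _k : Fin d, N ^ 2 / 2 :=
            Finset.sum_le_sum fun k _ => hterm k
        _ = (d : ℝ) * (N ^ 2 / 2) := by
            rw [Finset.sum_const, Finset.card_univ, Fintype.card_fin, nsmul_eq_mul]
    have hd1 : (1 : ℝ) ≤ d := by exact_mod_cast hd
    have hsq : T ^ 2 ≤ ((d : ℝ) * N) ^ 2 := by
      rw [hT]
      nlinarith [sq_nonneg N]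
    nlinarith [mul_nonneg (le_trans zero_le_one hd1) hN0]
end

section
/- Let n ≥ 2 and let σ denote the (n−1)-dimensional Hausdorff measure on ℝ^n restricted to the unit sphere S^{n−1} = {x ∈ ℝ^n : ‖x‖ = 1}. Then the integral of the nonnegative function (u, v) ↦ ‖u − v‖^{−n} over S^{n−1} × S^{n−1} with respect to the product measure σ × σ is infinite. -/
/-!
Let `σ` be `μH[d]` on the unit sphere of a `(d+1)`-dimensional space. For a unit vector `u`, the
orthogonal projection onto `(ℝ ∙ u)ᗮ` is 1-Lipschitz and maps the cap `sphere 0 1 ∩ ball u (2r)`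
onto a set containing the `r`-ball of the `d`-dimensional space `(ℝ ∙ u)ᗮ`, so this cap has
`σ`-measure at least `c rᵈ`. Since `‖u - v‖^{-(d+1)} ≥ (2r)^{-(d+1)}` on the cap, the inner integral
is at least `c' / r` for every `r ≤ 1`, hence infinite. Finitely many caps, each a Lipschitz graph
over a bounded subset of some `(ℝ ∙ u)ᗮ`, cover the sphere, so `σ` is finite and Tonelli applies.
-/

open MeasureTheory Metric Set Module
open scoped RealInnerProductSpace ENNReal

theorem ENNReal.eq_top_of_forall_mul_inv_ofReal_le {C I : ℝ≥0∞} (hC : C ≠ 0)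
    (h : ∀ r : ℝ, 0 < r → r ≤ 1 → C * (ENNReal.ofReal r)⁻¹ ≤ I) : I = ⊤ := by
  by_contra hI
  obtain ⟨k, hk⟩ := ENNReal.exists_nat_mul_gt hC hI
  have hr : (0 : ℝ) < ((k : ℝ) + 1)⁻¹ := by positivity
  have hk1 := h _ hr (inv_le_one_of_one_le₀ (by linarith [k.cast_nonneg (α := ℝ)]))
  rw [ENNReal.ofReal_inv_of_pos (by positivity), inv_inv,
    ENNReal.ofReal_add k.cast_nonneg zero_le_one, ENNReal.ofReal_natCast, ENNReal.ofReal_one] at hk1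
  exact (hk.trans_le (by rw [mul_comm]; gcongr; exact le_self_add)).not_ge hk1

theorem abs_sqrt_one_sub_sub_sqrt_one_sub_le {s t : ℝ} (hs : s ≤ 3 / 4) (ht : t ≤ 3 / 4) :
    |√(1 - s) - √(1 - t)| ≤ |s - t| := by
  have ha : 1 / 2 ≤ √(1 - s) := Real.le_sqrt_of_sq_le (by linarith)
  have hb : 1 / 2 ≤ √(1 - t) := Real.le_sqrt_of_sq_le (by linarith)
  have ha2 := Real.sq_sqrt (show 0 ≤ 1 - s by linarith)
  have hb2 := Real.sq_sqrt (show 0 ≤ 1 - t by linarith)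
  calc |√(1 - s) - √(1 - t)|
      ≤ |√(1 - s) - √(1 - t)| * (√(1 - s) + √(1 - t)) :=
        le_mul_of_one_le_right (abs_nonneg _) (by linarith)
    _ = |s - t| := by
        rw [← abs_of_pos (by linarith : 0 < √(1 - s) + √(1 - t)), ← abs_mul, abs_sub_comm s t]
        congr 1
        linear_combination ha2 - hb2

theorem abs_norm_sq_sub_norm_sq_le {F : Type*} [SeminormedAddCommGroup F] {x y : F}
    (hx : ‖x‖ ≤ 1) (hy : ‖y‖ ≤ 1) : |‖x‖ ^ 2 - ‖y‖ ^ 2| ≤ 2 * ‖x - y‖ := by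
  rw [sq_sub_sq, abs_mul, abs_of_nonneg (by positivity : 0 ≤ ‖x‖ + ‖y‖)]
  exact mul_le_mul (by linarith) (abs_norm_sub_norm_le x y) (abs_nonneg _) zero_le_two

section

variable {E : Type*} [NormedAddCommGroup E] [InnerProductSpace ℝ E] {u : E}

/-- The hemisphere around a unit vector `u`, as the graph of `w ↦ √(1 - ‖w‖²)` over `(ℝ ∙ u)ᗮ`. -/
noncomputable def sphereChart (u : E) (w : (ℝ ∙ u)ᗮ) : E := (w : E) + √(1 - ‖w‖ ^ 2) • u

theorem norm_coe_add_smul_sq (hu : ‖u‖ = 1) (w : (ℝ ∙ u)ᗮ) (a : ℝ) :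
    ‖(w : E) + a • u‖ ^ 2 = ‖w‖ ^ 2 + a ^ 2 := by
  have h : ⟪(w : E), a • u⟫ = 0 := by
    rw [inner_smul_right, Submodule.mem_orthogonal_singleton_iff_inner_left.mp w.2, mul_zero]
  rw [sq, sq, sq, norm_add_sq_eq_norm_sq_add_norm_sq_of_inner_eq_zero _ _ h, norm_smul, hu,
    mul_one, Real.norm_eq_abs, abs_mul_abs_self, Submodule.coe_norm]

theorem orthogonalProjectionOnto_add_inner_smul (hu : ‖u‖ = 1) (x : E) :
    ((ℝ ∙ u)ᗮ.orthogonalProjectionOnto x : E) + ⟪u, x⟫ • u = x := by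
  rw [← Submodule.starProjection_unit_singleton ℝ hu, ← Submodule.starProjection_apply,
    Submodule.starProjection_orthogonal]
  simp

theorem norm_sphereChart (hu : ‖u‖ = 1) {w : (ℝ ∙ u)ᗮ} (hw : ‖w‖ ≤ 1) :
    ‖sphereChart u w‖ = 1 := by
  have h : ‖sphereChart u w‖ ^ 2 = 1 := by
    rw [sphereChart, norm_coe_add_smul_sq hu, Real.sq_sqrt (by nlinarith [norm_nonneg w])]
    ring
  exact (pow_eq_one_iff_of_nonneg (norm_nonneg _) two_ne_zero).mp h

theorem orthogonalProjectionOnto_sphereChart (w : (ℝ ∙ u)ᗮ) :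
    (ℝ ∙ u)ᗮ.orthogonalProjectionOnto (sphereChart u w) = w := by
  simp [sphereChart, Submodule.orthogonalProjectionOnto_orthogonalComplement_singleton_eq_zero]

theorem norm_sphereChart_sub_le (hu : ‖u‖ = 1) {w : (ℝ ∙ u)ᗮ} (hw : ‖w‖ ≤ 1) :
    ‖sphereChart u w - u‖ ≤ 2 * ‖w‖ := by
  have hsq : 0 ≤ 1 - ‖w‖ ^ 2 := by nlinarith [norm_nonneg w]
  have hs := Real.sq_sqrt hsq
  have hs1 : √(1 - ‖w‖ ^ 2) ≤ 1 := Real.sqrt_le_one.mpr (by nlinarith [norm_nonneg w])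
  have h : ‖sphereChart u w - u‖ ^ 2 ≤ (2 * ‖w‖) ^ 2 := by
    rw [sphereChart, add_sub_assoc,
      show √(1 - ‖w‖ ^ 2) • u - u = (√(1 - ‖w‖ ^ 2) - 1) • u by module, norm_coe_add_smul_sq hu]
    nlinarith [Real.sqrt_nonneg (1 - ‖w‖ ^ 2), norm_nonneg w]
  exact le_of_sq_le_sq h (by positivity)

theorem sphereChart_orthogonalProjectionOnto (hu : ‖u‖ = 1) {x : E} (hx : ‖x‖ = 1)
    (hux : 0 ≤ ⟪u, x⟫) :
    sphereChart u ((ℝ ∙ u)ᗮ.orthogonalProjectionOnto x) = x := by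
  have h := orthogonalProjectionOnto_add_inner_smul hu x
  have hnorm := norm_coe_add_smul_sq hu ((ℝ ∙ u)ᗮ.orthogonalProjectionOnto x) ⟪u, x⟫
  rw [h, hx] at hnorm
  rw [sphereChart, show 1 - ‖(ℝ ∙ u)ᗮ.orthogonalProjectionOnto x‖ ^ 2 = ⟪u, x⟫ ^ 2 by linarith,
    Real.sqrt_sq hux, h]

theorem norm_orthogonalProjectionOnto_sq (hu : ‖u‖ = 1) (x : E) :
    ‖(ℝ ∙ u)ᗮ.orthogonalProjectionOnto x‖ ^ 2 = ‖x‖ ^ 2 - ⟪u, x⟫ ^ 2 := by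
  rw [← orthogonalProjectionOnto_add_inner_smul hu x, norm_coe_add_smul_sq hu,
    orthogonalProjectionOnto_add_inner_smul hu x]
  ring

theorem lipschitzOnWith_sphereChart (hu : ‖u‖ = 1) :
    LipschitzOnWith 3 (sphereChart u) {w | ‖w‖ ^ 2 ≤ 3 / 4} := by
  refine LipschitzOnWith.of_dist_le_mul
    fun w (hw : ‖w‖ ^ 2 ≤ 3 / 4) v (hv : ‖v‖ ^ 2 ≤ 3 / 4) => ?_
  rw [dist_eq_norm, dist_eq_norm]
  have hw1 : ‖w‖ ≤ 1 := by nlinarith [norm_nonneg w]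
  have hv1 : ‖v‖ ≤ 1 := by nlinarith [norm_nonneg v]
  have hroot := (abs_sqrt_one_sub_sub_sqrt_one_sub_le hw hv).trans
    (abs_norm_sq_sub_norm_sq_le hw1 hv1)
  have h : ‖sphereChart u w - sphereChart u v‖ ^ 2 ≤ (3 * ‖w - v‖) ^ 2 := by
    rw [show sphereChart u w - sphereChart u v = ((w - v : (ℝ ∙ u)ᗮ) : E)
        + (√(1 - ‖w‖ ^ 2) - √(1 - ‖v‖ ^ 2)) • u by simp only [sphereChart]; push_cast; module,
      norm_coe_add_smul_sq hu, ← sq_abs (_ - _)]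
    nlinarith [abs_nonneg (√(1 - ‖w‖ ^ 2) - √(1 - ‖v‖ ^ 2))]
  exact le_of_sq_le_sq h (by positivity)

theorem sphere_inter_subset_image_sphereChart (hu : ‖u‖ = 1) :
    sphere (0 : E) 1 ∩ {x | 1 / 2 < ⟪u, x⟫} ⊆ sphereChart u '' {w | ‖w‖ ^ 2 ≤ 3 / 4} := by
  rintro x ⟨hx, hux : 1 / 2 < ⟪u, x⟫⟩
  rw [mem_sphere_zero_iff_norm] at hx
  refine ⟨_, ?_, sphereChart_orthogonalProjectionOnto hu hx (by linarith)⟩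
  rw [mem_ofPred_eq, norm_orthogonalProjectionOnto_sq hu, hx]
  nlinarith

variable [MeasurableSpace E] [BorelSpace E]

theorem hausdorffMeasure_ball_le_sphere_inter_ball (hu : ‖u‖ = 1) {r : ℝ} (hr : r ≤ 1) {d : ℝ}
    (hd : 0 ≤ d) : μH[d] (ball (0 : (ℝ ∙ u)ᗮ) r) ≤ μH[d] (sphere (0 : E) 1 ∩ ball u (2 * r)) := by
  refine le_trans (measure_mono ?_) (hausdorffMeasure_orthogonalProjectionOnto_le _ d _ hd)
  intro w hw
  rw [mem_ball_zero_iff] at hw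
  refine ⟨sphereChart u w, ⟨?_, ?_⟩, orthogonalProjectionOnto_sphereChart w⟩
  · exact mem_sphere_zero_iff_norm.mpr (norm_sphereChart hu (hw.le.trans hr))
  · rw [mem_ball, dist_eq_norm]
    exact (norm_sphereChart_sub_le hu (hw.le.trans hr)).trans_lt (by linarith)

variable [FiniteDimensional ℝ E] {d : ℕ} [Fact (finrank ℝ E = d + 1)]

theorem isAddHaarMeasure_hausdorffMeasure_orthogonal_span_singleton (hu : u ≠ 0) :
    (μH[d] : Measure (ℝ ∙ u)ᗮ).IsAddHaarMeasure := by
  rw [← Submodule.finrank_orthogonal_span_singleton (𝕜 := ℝ) (n := d) hu]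
  infer_instance

theorem lintegral_sphere_inv_norm_sub_pow_eq_top_of_norm_eq_one (hu : ‖u‖ = 1) :
    ∫⁻ v in sphere (0 : E) 1, (ENNReal.ofReal ‖u - v‖ ^ (d + 1))⁻¹ ∂μH[d] = ⊤ := by
  have hu0 : u ≠ 0 := norm_ne_zero_iff.mp (hu ▸ one_ne_zero)
  have := isAddHaarMeasure_hausdorffMeasure_orthogonal_span_singleton (d := d) hu0
  set c := μH[d] (ball (0 : (ℝ ∙ u)ᗮ) 1)
  have hc : c ≠ 0 := (measure_ball_pos _ _ one_pos).ne'
  refine ENNReal.eq_top_of_forall_mul_inv_ofReal_le (C := (2 ^ (d + 1))⁻¹ * c) (by simp [hc])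
    fun r hr hr1 => ?_
  set a := ENNReal.ofReal r
  have ha : a ≠ 0 := ENNReal.ofReal_pos.mpr hr |>.ne'
  have hcap : a ^ d * c ≤ μH[d] (sphere 0 1 ∩ ball u (2 * r)) := by
    calc a ^ d * c = μH[d] (ball (0 : (ℝ ∙ u)ᗮ) r) := by
          rw [Measure.addHaar_ball_of_pos _ _ hr,
            Submodule.finrank_orthogonal_span_singleton (n := d) hu0, ENNReal.ofReal_pow hr.le]
      _ ≤ _ := hausdorffMeasure_ball_le_sphere_inter_ball hu hr1 d.cast_nonneg
  have hball : (ENNReal.ofReal (2 * r) ^ (d + 1))⁻¹ * μH[d] (sphere 0 1 ∩ ball u (2 * r)) ≤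
      ∫⁻ v in sphere (0 : E) 1, (ENNReal.ofReal ‖u - v‖ ^ (d + 1))⁻¹ ∂μH[d] := by
    rw [inter_comm, ← Measure.restrict_apply measurableSet_ball,
      ← lintegral_indicator_const measurableSet_ball]
    refine lintegral_mono (indicator_le fun v hv => ?_)
    rw [mem_ball', dist_eq_norm] at hv
    gcongr
  have h2a : ENNReal.ofReal (2 * r) = 2 * a := by
    rw [ENNReal.ofReal_mul zero_le_two, ENNReal.ofReal_ofNat]
  have hcancel : (a ^ d)⁻¹ * a ^ d = 1 :=
    ENNReal.inv_mul_cancel (pow_ne_zero _ ha) (ENNReal.pow_ne_top ENNReal.ofReal_ne_top)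
  calc (2 ^ (d + 1))⁻¹ * c * a⁻¹
      = (ENNReal.ofReal (2 * r) ^ (d + 1))⁻¹ * (a ^ d * c) := by
        rw [h2a, mul_pow, pow_succ a, ENNReal.mul_inv (by simp) (by simp),
          ENNReal.mul_inv (.inr ENNReal.ofReal_ne_top) (.inr ha)]
        rw [show (2 ^ (d + 1))⁻¹ * ((a ^ d)⁻¹ * a⁻¹) * (a ^ d * c) =
          (2 ^ (d + 1))⁻¹ * c * a⁻¹ * ((a ^ d)⁻¹ * a ^ d) by ring, hcancel, mul_one]
    _ ≤ _ := by gcongr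
    _ ≤ _ := hball

theorem hausdorffMeasure_image_sphereChart_lt_top (hu : ‖u‖ = 1) :
    μH[d] (sphereChart u '' {w | ‖w‖ ^ 2 ≤ 3 / 4}) < ⊤ := by
  have := isAddHaarMeasure_hausdorffMeasure_orthogonal_span_singleton (d := d)
    (norm_ne_zero_iff.mp (hu ▸ one_ne_zero))
  have hball : {w : (ℝ ∙ u)ᗮ | ‖w‖ ^ 2 ≤ 3 / 4} ⊆ closedBall 0 1 :=
    fun w (hw : ‖w‖ ^ 2 ≤ 3 / 4) => mem_closedBall_zero_iff.mpr (by nlinarith [norm_nonneg w])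
  refine ((lipschitzOnWith_sphereChart hu).hausdorffMeasure_image_le d.cast_nonneg).trans_lt
    (ENNReal.mul_lt_top (ENNReal.rpow_lt_top_of_nonneg d.cast_nonneg ENNReal.coe_ne_top) ?_)
  exact (measure_mono hball).trans_lt measure_closedBall_lt_top

theorem hausdorffMeasure_sphere_lt_top : μH[d] (sphere (0 : E) 1) < ⊤ := by
  obtain ⟨t, ht⟩ := (isCompact_sphere (0 : E) 1).elim_finite_subcover
    (fun u : sphere (0 : E) 1 => {x : E | 1 / 2 < ⟪(u : E), x⟫})
    (fun u => isOpen_lt continuous_const (continuous_const.inner continuous_id))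
    fun x hx => mem_iUnion.mpr ⟨⟨x, hx⟩, by
      norm_num [real_inner_self_eq_norm_sq, mem_sphere_zero_iff_norm.mp hx]⟩
  have hcover : sphere (0 : E) 1 ⊆ ⋃ u ∈ t, sphereChart (u : E) '' {w | ‖w‖ ^ 2 ≤ 3 / 4} :=
    fun x hx => by
      obtain ⟨u, hut, hux⟩ := mem_iUnion₂.mp (ht hx)
      exact mem_iUnion₂.mpr ⟨u, hut, sphere_inter_subset_image_sphereChart
        (mem_sphere_zero_iff_norm.mp u.2) ⟨hx, hux⟩⟩
  refine (measure_mono hcover).trans_lt ((measure_biUnion_finset_le _ _).trans_lt ?_)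
  exact ENNReal.sum_lt_top.mpr fun u _ =>
    hausdorffMeasure_image_sphereChart_lt_top (mem_sphere_zero_iff_norm.mp u.2)

theorem hausdorffMeasure_sphere_pos : 0 < μH[d] (sphere (0 : E) 1) := by
  have : Nontrivial E := nontrivial_of_finrank_eq_succ (Fact.out : finrank ℝ E = d + 1)
  obtain ⟨u, hu⟩ := exists_norm_eq E zero_le_one
  have := isAddHaarMeasure_hausdorffMeasure_orthogonal_span_singleton (d := d)
    (norm_ne_zero_iff.mp (hu ▸ one_ne_zero))
  calc 0 < μH[d] (ball (0 : (ℝ ∙ u)ᗮ) 1) := measure_ball_pos _ _ one_pos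
    _ ≤ μH[d] (sphere 0 1 ∩ ball u (2 * 1)) :=
      hausdorffMeasure_ball_le_sphere_inter_ball hu le_rfl d.cast_nonneg
    _ ≤ _ := measure_mono inter_subset_left

theorem lintegral_prod_sphere_inv_norm_sub_pow_eq_top :
    ∫⁻ p : E × E, (ENNReal.ofReal ‖p.1 - p.2‖ ^ (d + 1))⁻¹
      ∂((μH[d].restrict (sphere (0 : E) 1)).prod (μH[d].restrict (sphere 0 1))) = ⊤ := by
  have : IsFiniteMeasure (μH[d].restrict (sphere (0 : E) 1)) :=
    isFiniteMeasure_restrict.mpr hausdorffMeasure_sphere_lt_top.ne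
  rw [lintegral_prod _ (by fun_prop),
    setLIntegral_congr_fun isClosed_sphere.measurableSet (g := fun _ => ⊤) fun u hu =>
      lintegral_sphere_inv_norm_sub_pow_eq_top_of_norm_eq_one (mem_sphere_zero_iff_norm.mp hu),
    setLIntegral_const, ENNReal.top_mul hausdorffMeasure_sphere_pos.ne']

end

/-- Let `σ` be the `(n-1)`-dimensional Hausdorff measure restricted to the unit sphere
`S^{n-1} ⊂ ℝⁿ`. The integral of `(u, v) ↦ ‖u - v‖^{-n}` over `S^{n-1} × S^{n-1}` with
respect to `σ × σ` is infinite (with the convention `‖u - v‖^{-n} = ∞` when `u = v`). -/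
theorem lintegral_sphere_inv_norm_sub_pow_eq_top (n : ℕ) (hn : 2 ≤ n) :
    (∫⁻ p : EuclideanSpace ℝ (Fin n) × EuclideanSpace ℝ (Fin n),
        (ENNReal.ofReal ‖p.1 - p.2‖) ^ (-(n : ℝ))
      ∂(((μH[(n : ℝ) - 1] : Measure (EuclideanSpace ℝ (Fin n))).restrict
            (Metric.sphere 0 1)).prod
          ((μH[(n : ℝ) - 1] : Measure (EuclideanSpace ℝ (Fin n))).restrict
            (Metric.sphere 0 1)))) = ⊤ := by
  obtain ⟨d, rfl⟩ := Nat.exists_eq_add_of_le' (one_le_two.trans hn)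
  have : Fact (finrank ℝ (EuclideanSpace ℝ (Fin (d + 1))) = d + 1) := ⟨finrank_euclideanSpace_fin⟩
  have hdim : ((d + 1 : ℕ) : ℝ) - 1 = d := by push_cast; ring
  simp only [hdim, ENNReal.rpow_neg, ENNReal.rpow_natCast]
  exact lintegral_prod_sphere_inv_norm_sub_pow_eq_top
end

section
/- Let M be a real m×a matrix, L a real m×b matrix, and P a real m×m matrix satisfying Pᵀ = P, P·P = P, P·M = M, and P = M·X for some a×m matrix X (so that P is the orthogonal projection onto the column space of M). Let Q = [M L] be the m×(a+b) matrix obtained by concatenating the columns of M and L. Then det(QᵀQ) = det(MᵀM) · det( ((I − P)L)ᵀ · ((I − P)L) ). Equivalently, vol(Q) = vol(M) · vol((I − P)L), where vol(A) := √(det(AᵀA)). -/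
/-!
Replacing `L` by `(1 - P) L = L - M (X L)` is a unimodular column operation on `[M L]`,
so it preserves the Gram determinant. Since `Pᵀ = P` and `P M = M`, the columns of
`(1 - P) L` are orthogonal to those of `M`, so the Gram matrix of `[M, (1 - P) L]` is
block diagonal.
-/

open Matrix

namespace Matrix

variable {R : Type*} [CommRing R] {m n p : Type*} [Fintype n] [Fintype p]
  [DecidableEq n] [DecidableEq p]

theorem fromCols_add_mul_eq_fromCols_mul_fromBlocks (M : Matrix m n R) (L : Matrix m p R)
    (Y : Matrix n p R) :
    fromCols M (L + M * Y) = fromCols M L * (fromBlocks 1 Y 0 1 : Matrix (n ⊕ p) (n ⊕ p) R) := by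
  rw [fromCols_mul_fromBlocks]
  simp only [Matrix.mul_one, Matrix.mul_zero, add_zero, add_comm]

variable [Fintype m]

theorem det_transpose_mul_fromCols_add_mul (M : Matrix m n R) (L : Matrix m p R)
    (Y : Matrix n p R) :
    ((fromCols M (L + M * Y))ᵀ * fromCols M (L + M * Y)).det
      = ((fromCols M L)ᵀ * fromCols M L).det := by
  have hU : (fromBlocks (1 : Matrix n n R) Y 0 1).det = 1 := by simp
  rw [fromCols_add_mul_eq_fromCols_mul_fromBlocks, Matrix.transpose_mul, Matrix.mul_assoc,
    ← Matrix.mul_assoc _ (fromCols M L), det_mul, det_mul, det_transpose, hU, one_mul, mul_one]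

theorem det_transpose_mul_fromCols_of_transpose_mul_eq_zero (M : Matrix m n R)
    (N : Matrix m p R) (h : Mᵀ * N = 0) :
    ((fromCols M N)ᵀ * fromCols M N).det = (Mᵀ * M).det * (Nᵀ * N).det := by
  have h' : Nᵀ * M = 0 := by
    rw [← transpose_transpose (Nᵀ * M), transpose_mul, transpose_transpose, h,
      transpose_zero]
  rw [transpose_fromCols, fromRows_mul_fromCols, h, h', det_fromBlocks_zero₂₁]

end Matrix

theorem det_gram_fromColumns_projection_general (m a b : ℕ)
    (M : Matrix (Fin m) (Fin a) ℝ) (L : Matrix (Fin m) (Fin b) ℝ)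
    (P : Matrix (Fin m) (Fin m) ℝ)
    (hPsym : Pᵀ = P) (hPM : P * M = M)
    (hPX : ∃ X : Matrix (Fin a) (Fin m) ℝ, P = M * X) :
    ((Matrix.fromCols M L)ᵀ * Matrix.fromCols M L).det
      = (Mᵀ * M).det *
        ((((1 : Matrix (Fin m) (Fin m) ℝ) - P) * L)ᵀ *
          (((1 : Matrix (Fin m) (Fin m) ℝ) - P) * L)).det := by
  obtain ⟨X, hX⟩ := hPX
  have hMP : Mᵀ * (1 - P) = 0 :=
    calc Mᵀ * (1 - P) = ((1 - P) * M)ᵀ := by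
          rw [transpose_mul, transpose_sub, transpose_one, hPsym]
      _ = 0 := by rw [Matrix.sub_mul, Matrix.one_mul, hPM, sub_self, transpose_zero]
  have hN : (1 - P) * L = L + M * -(X * L) := by
    rw [Matrix.sub_mul, Matrix.one_mul, hX, Matrix.mul_neg, Matrix.mul_assoc, sub_eq_add_neg]
  have hMN : Mᵀ * ((1 - P) * L) = 0 := by rw [← Matrix.mul_assoc, hMP, Matrix.zero_mul]
  rw [← det_transpose_mul_fromCols_of_transpose_mul_eq_zero M _ hMN, hN,
    det_transpose_mul_fromCols_add_mul]

/-- Lemma 5.2 of the paper: if `P` is the orthogonal projection onto the column space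
of `M` (i.e. `Pᵀ = P`, `P² = P`, `PM = M`, and `P = MX` for some `X`), and
`Q = [M L]`, then `det(QᵀQ) = det(MᵀM) · det(((I - P)L)ᵀ((I - P)L))`; equivalently
`vol(Q) = vol(M) · vol((I - P)L)`. -/
theorem det_gram_fromColumns_projection (m a b : ℕ)
    (M : Matrix (Fin m) (Fin a) ℝ) (L : Matrix (Fin m) (Fin b) ℝ)
    (P : Matrix (Fin m) (Fin m) ℝ)
    (hPsym : Pᵀ = P) (hPidem : P * P = P) (hPM : P * M = M)
    (hPX : ∃ X : Matrix (Fin a) (Fin m) ℝ, P = M * X) :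
    ((Matrix.fromCols M L)ᵀ * Matrix.fromCols M L).det
      = (Mᵀ * M).det *
        ((((1 : Matrix (Fin m) (Fin m) ℝ) - P) * L)ᵀ *
          (((1 : Matrix (Fin m) (Fin m) ℝ) - P) * L)).det :=
  det_gram_fromColumns_projection_general m a b M L P hPsym hPM hPX
end

section
/- Let d ≥ 3 and n₁,…,n_d ≥ 2, and set Σ := 1 + ∑_{k=1}^d (n_k − 1). Let u^1,…,u^d and v^1,…,v^d be unit vectors with u^k, v^k ∈ ℝ^{n_k}, set 𝒰 := u^1 ⊗ ⋯ ⊗ u^d and 𝒱 := v^1 ⊗ ⋯ ⊗ v^d, and assume 𝒰 ≠ −𝒱. Fix complement frames for (u^k) and for (v^k), with tangent-frame tensors a_{k,j} and b_{k,j} respectively, and let P denote the orthogonal projection of the tensor space onto the span of {𝒰, 𝒱}. For real s, t, let C(s,t) be the family of 2(Σ−1) tensors consisting of s·(Id − P)(a_{k,j}) for all (k,j), together with t·(Id − P)(b_{k,j}) for all (k,j). Then ∫_0^∞ ∫_0^∞ q(C(λ, μ)) · e^{−‖λ𝒰 + μ𝒱‖²/2} dλ dμ = 2^{(2Σ−3)/2}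 · Γ((2Σ−1)/2) · ∫_0^{π/2} q(C(cos θ, sin θ)) / ‖cos θ · 𝒰 + sin θ · 𝒱‖^{2Σ−1} dθ, where Γ is the real Gamma function. -/
open MeasureTheory Real
open scoped RealInnerProductSpace

/-- The smallest singular value of a finite family of vectors. -/
noncomputable def smin {F ι : Type*} [NormedAddCommGroup F] [InnerProductSpace ℝ F]
    [Fintype ι] (w : ι → F) : ℝ :=
  sInf {r : ℝ | ∃ x : ι → ℝ, ∑ i, x i ^ 2 = 1 ∧ r = ‖∑ i, x i • w i‖}

/-- `q(w) = √(det Gram(w)) / σ_min(w)` (with the convention `x / 0 = 0`). -/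
noncomputable def qval {F ι : Type*} [NormedAddCommGroup F] [InnerProductSpace ℝ F]
    [Fintype ι] [DecidableEq ι] (w : ι → F) : ℝ :=
  Real.sqrt (Matrix.det (Matrix.of fun i j => ⟪w i, w j⟫)) / smin w

/-- The family `C(s, t)` of `2(Σ-1)` tensors: `s · (Id - P)(a_{k,j})` for the
tangent-frame tensors of `u`, together with `t · (Id - P)(b_{k,j})` for the
tangent-frame tensors of `v`. -/
noncomputable def famC {d : ℕ} {n : Fin d → ℕ}
    (u v : ∀ k, EuclideanSpace ℝ (Fin (n k)))
    (U V : ∀ k, Fin (n k - 1) → EuclideanSpace ℝ (Fin (n k)))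
    (P : EuclideanSpace ℝ (∀ k, Fin (n k)) →ₗ[ℝ] EuclideanSpace ℝ (∀ k, Fin (n k)))
    (s t : ℝ) :
    ((Σ k : Fin d, Fin (n k - 1)) ⊕ (Σ k : Fin d, Fin (n k - 1))) →
      EuclideanSpace ℝ (∀ k, Fin (n k)) :=
  Sum.elim
    (fun kj => s • (rankOne (Function.update u kj.1 (U kj.1 kj.2)) -
      P (rankOne (Function.update u kj.1 (U kj.1 kj.2)))))
    (fun kj => t • (rankOne (Function.update v kj.1 (V kj.1 kj.2)) -
      P (rankOne (Function.update v kj.1 (V kj.1 kj.2)))))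

/-! Pass to polar coordinates `(λ, μ) = (r cos θ, r sin θ)` on the open quadrant. Since
`C(r s, r t) = r • C(s, t)` is a family of `2(Σ-1)` vectors, `q` is homogeneous of degree
`2Σ-3` along it, and for fixed `θ` the radial integral is the Gaussian moment
`q(C(cos θ, sin θ)) ∫_0^∞ r^{2Σ-2} e^{-c² r² / 2} dr`, `c = ‖cos θ 𝒰 + sin θ 𝒱‖`,
which equals `2^{(2Σ-3)/2} Γ((2Σ-1)/2) q(C(cos θ, sin θ)) / c^{2Σ-1}`. Here `c > 0` because
`‖𝒰‖ = ‖𝒱‖ = 1` and `𝒰 ≠ -𝒱`. -/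

open Set
open scoped ENNReal

theorem lintegral_Ioi_pow_mul_exp_neg_sq_div_two (m : ℕ) {c : ℝ} (hc : 0 < c) :
    ∫⁻ r in Ioi (0 : ℝ), ENNReal.ofReal (r ^ m * exp (-(c * r) ^ 2 / 2)) =
      ENNReal.ofReal (2 ^ (((m : ℝ) - 1) / 2) * Gamma (((m : ℝ) + 1) / 2) / c ^ (m + 1)) := by
  have hb : 0 < c ^ 2 / 2 := by positivity
  have hm : (-1 : ℝ) < m := neg_one_lt_zero.trans_le m.cast_nonneg
  have hrpow (r : ℝ) : r ^ m * exp (-(c * r) ^ 2 / 2) =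
      r ^ (m : ℝ) * exp (-(c ^ 2 / 2) * r ^ 2) := by
    rw [rpow_natCast]
    ring_nf
  have hintegral := integral_rpow_mul_exp_neg_mul_rpow two_pos hm hb
  simp only [rpow_two] at hintegral
  have hc2 : (c ^ 2) ^ (-((m : ℝ) + 1) / 2) = (c ^ (m + 1))⁻¹ := by
    rw [← rpow_natCast c 2, ← rpow_mul hc.le, ← rpow_natCast, ← rpow_neg hc.le]
    push_cast
    ring_nf
  simp_rw [hrpow]
  rw [← ofReal_integral_eq_lintegral_ofReal (integrableOn_rpow_mul_exp_neg_mul_sq hb hm)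
    (ae_restrict_of_forall_mem measurableSet_Ioi fun r (hr : 0 < r) => by positivity),
    hintegral, div_rpow (sq_nonneg c) zero_le_two, hc2, neg_div, rpow_neg zero_le_two,
    show ((m : ℝ) - 1) / 2 = ((m : ℝ) + 1) / 2 - 1 by ring, rpow_sub_one two_ne_zero]
  congr 1
  field_simp

theorem polarCoord_symm_image_Ioi_prod_Ioo :
    polarCoord.symm '' (Ioi (0 : ℝ) ×ˢ Ioo 0 (π / 2)) = Ioi 0 ×ˢ Ioi 0 := by
  ext ⟨x, y⟩
  constructor
  · rintro ⟨⟨r, θ⟩, ⟨hr, hθ₀, hθ₁⟩, hxy⟩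
    obtain ⟨rfl, rfl⟩ := Prod.ext_iff.mp hxy
    exact ⟨mul_pos hr (cos_pos_of_mem_Ioo ⟨by linarith, hθ₁⟩),
      mul_pos hr (sin_pos_of_pos_of_lt_pi hθ₀ (by linarith))⟩
  · rintro ⟨hx : 0 < x, hy : 0 < y⟩
    have hsource : (x, y) ∈ polarCoord.source := Or.inl hx
    refine ⟨polarCoord (x, y), ?_, polarCoord.left_inv hsource⟩
    obtain ⟨hr : 0 < (polarCoord (x, y)).1, hθ₀, hθ₁⟩ := polarCoord.map_source hsource
    obtain ⟨hcos, hsin⟩ := Prod.ext_iff.mp (polarCoord.left_inv hsource)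
    simp only [polarCoord_symm_apply] at hcos hsin
    refine ⟨hr, lt_of_not_ge fun h => ?_, lt_of_not_ge fun h => ?_⟩
    · nlinarith [sin_nonpos_of_nonpos_of_neg_pi_le h hθ₀.le]
    · nlinarith [cos_nonpos_of_pi_div_two_le_of_le h (by linarith)]

theorem lintegral_Ioi_lintegral_Ioi_eq_polar (f : ℝ × ℝ → ℝ≥0∞) (hf : Measurable f) :
    ∫⁻ x in Ioi (0 : ℝ), ∫⁻ y in Ioi (0 : ℝ), f (x, y) =
      ∫⁻ θ in Ioo 0 (π / 2), ∫⁻ r in Ioi (0 : ℝ),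
        ENNReal.ofReal r * f (r * cos θ, r * sin θ) := by
  have hs : MeasurableSet (Ioi (0 : ℝ) ×ˢ Ioo 0 (π / 2)) :=
    measurableSet_Ioi.prod measurableSet_Ioo
  have hsub : Ioi (0 : ℝ) ×ˢ Ioo 0 (π / 2) ⊆ polarCoord.target :=
    prod_mono le_rfl (Ioo_subset_Ioo (by linarith [pi_pos]) (by linarith [pi_pos]))
  calc ∫⁻ x in Ioi (0 : ℝ), ∫⁻ y in Ioi (0 : ℝ), f (x, y)
      = ∫⁻ p in polarCoord.symm '' (Ioi (0 : ℝ) ×ˢ Ioo 0 (π / 2)), f p := by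
        rw [polarCoord_symm_image_Ioi_prod_Ioo, Measure.volume_eq_prod,
          ← Measure.prod_restrict, lintegral_prod _ hf.aemeasurable]
    _ = ∫⁻ p in Ioi (0 : ℝ) ×ˢ Ioo 0 (π / 2),
          ENNReal.ofReal p.1 * f (polarCoord.symm p) := by
        rw [lintegral_image_eq_lintegral_abs_det_fderiv_mul volume hs
          (fun p _ => (hasFDerivAt_polarCoord_symm p).hasFDerivWithinAt)
          (polarCoord.symm.injOn.mono hsub)]
        refine setLIntegral_congr_fun hs fun p hp => ?_
        rw [det_fderivPolarCoordSymm, abs_of_pos hp.1]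
    _ = _ := by
        have hmeas : Measurable fun p : ℝ × ℝ => ENNReal.ofReal p.1 * f (polarCoord.symm p) :=
          measurable_fst.ennreal_ofReal.mul (hf.comp continuous_polarCoord_symm.measurable)
        rw [Measure.volume_eq_prod, ← Measure.prod_restrict,
          lintegral_prod_symm _ hmeas.aemeasurable]
        rfl

theorem smul_add_smul_ne_zero_of_norm_eq_s10 {E : Type*} [NormedAddCommGroup E] [NormedSpace ℝ E]
    {a b : E} (hab : ‖a‖ = ‖b‖) (hne : a ≠ -b) {s t : ℝ} (hs : 0 < s) (ht : 0 < t) :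
    s • a + t • b ≠ 0 := by
  intro h
  have hsa : s • a = -(t • b) := eq_neg_of_add_eq_zero_left h
  have hst : s = t := by
    have hnorm := congrArg norm hsa
    rw [norm_neg, norm_smul, norm_smul, Real.norm_of_nonneg hs.le, Real.norm_of_nonneg ht.le,
      hab] at hnorm
    rcases eq_or_ne ‖b‖ 0 with hb | hb
    · exact absurd (by rw [norm_eq_zero.mp hb, norm_eq_zero.mp (hab.trans hb), neg_zero]) hne
    · exact mul_right_cancel₀ hb hnorm
  subst hst
  exact hne (smul_right_injective E hs.ne' (by simpa [smul_neg] using hsa))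

section SingularValues

variable {F ι : Type*} [NormedAddCommGroup F] [InnerProductSpace ℝ F] [Fintype ι]

theorem smin_eq_iInf (w : ι → F) :
    smin w = ⨅ x : {x : ι → ℝ // ∑ i, x i ^ 2 = 1}, ‖∑ i, x.1 i • w i‖ := by
  rw [smin, iInf]
  congr 1
  ext r
  simp [eq_comm]

theorem smin_nonneg (w : ι → F) : 0 ≤ smin w := by
  rw [smin_eq_iInf]
  exact Real.iInf_nonneg fun _ => norm_nonneg _

theorem smin_smul (w : ι → F) {r : ℝ} (hr : 0 ≤ r) : smin (r • w) = r * smin w := by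
  simp only [smin_eq_iInf, Real.mul_iInf_of_nonneg hr, Pi.smul_apply, smul_comm _ r,
    ← Finset.smul_sum, norm_smul, Real.norm_of_nonneg hr]

theorem upperSemicontinuous_smin : UpperSemicontinuous (smin : (ι → F) → ℝ) := by
  simp_rw [funext smin_eq_iInf]
  exact upperSemicontinuous_ciInf (fun w => ⟨0, by rintro _ ⟨x, rfl⟩; exact norm_nonneg _⟩)
    fun x => (continuous_finsetSum _ fun i _ =>
      continuous_const.smul (continuous_apply i)).norm.upperSemicontinuous

variable [DecidableEq ι]

theorem qval_nonneg (w : ι → F) : 0 ≤ qval w :=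
  div_nonneg (Real.sqrt_nonneg _) (smin_nonneg w)

theorem qval_smul [Nonempty ι] (w : ι → F) {r : ℝ} (hr : 0 < r) :
    qval (r • w) = r ^ (Fintype.card ι - 1) * qval w := by
  have hgram : (Matrix.of fun i j => ⟪(r • w) i, (r • w) j⟫) =
      (r ^ 2) • Matrix.of fun i j => ⟪w i, w j⟫ := by
    ext i j
    simp only [Matrix.of_apply, Matrix.smul_apply, Pi.smul_apply, real_inner_smul_left,
      real_inner_smul_right, smul_eq_mul]
    ring
  have hcard : r ^ Fintype.card ι = r * r ^ (Fintype.card ι - 1) := by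
    rw [← pow_succ', Nat.sub_add_cancel Fintype.card_pos]
  rw [qval, qval, hgram, Matrix.det_smul, ← pow_mul, mul_comm 2, pow_mul,
    Real.sqrt_mul (sq_nonneg _), Real.sqrt_sq (pow_nonneg hr.le _), smin_smul w hr.le, hcard,
    mul_assoc, mul_div_mul_left _ _ hr.ne', mul_div_assoc]

theorem Continuous.measurable_qval_comp {α : Type*} [TopologicalSpace α] [MeasurableSpace α]
    [OpensMeasurableSpace α] {W : α → ι → F} (hW : Continuous W) :
    Measurable fun a => qval (W a) := by
  have hWi (i : ι) : Continuous fun a => W a i := (continuous_apply i).comp hW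
  refine Measurable.div ?_ (upperSemicontinuous_smin.comp hW).measurable
  exact (Real.continuous_sqrt.comp (continuous_matrix fun i j =>
    (hWi i).inner (hWi j)).matrix_det).measurable

theorem lintegral_Ioi_mul_qval_smul_mul_exp {E : Type*} [NormedAddCommGroup E]
    [NormedSpace ℝ E] [Nonempty ι] (w : ι → F) {x : E} (hx : x ≠ 0) :
    ∫⁻ r in Ioi (0 : ℝ),
        ENNReal.ofReal r * ENNReal.ofReal (qval (r • w) * exp (-‖r • x‖ ^ 2 / 2)) =
      ENNReal.ofReal (2 ^ (((Fintype.card ι : ℝ) - 1) / 2) *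
        Gamma (((Fintype.card ι : ℝ) + 1) / 2)) *
      ENNReal.ofReal (qval w / ‖x‖ ^ (Fintype.card ι + 1)) := by
  have hx : 0 < ‖x‖ := norm_pos_iff.mpr hx
  have hK : 0 ≤ 2 ^ (((Fintype.card ι : ℝ) - 1) / 2) *
      Gamma (((Fintype.card ι : ℝ) + 1) / 2) :=
    mul_nonneg (rpow_nonneg zero_le_two _) (Gamma_nonneg_of_nonneg (by positivity))
  have hintegrand : ∀ r ∈ Ioi (0 : ℝ),
      ENNReal.ofReal r * ENNReal.ofReal (qval (r • w) * exp (-‖r • x‖ ^ 2 / 2)) =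
        ENNReal.ofReal (qval w) *
          ENNReal.ofReal (r ^ Fintype.card ι * exp (-(‖x‖ * r) ^ 2 / 2)) := by
    intro r (hr : 0 < r)
    have hpow : r ^ Fintype.card ι = r * r ^ (Fintype.card ι - 1) := by
      rw [← pow_succ', Nat.sub_add_cancel Fintype.card_pos]
    rw [qval_smul w hr, norm_smul, Real.norm_of_nonneg hr.le, ← ENNReal.ofReal_mul hr.le,
      ← ENNReal.ofReal_mul (qval_nonneg w), hpow]
    ring_nf
  rw [setLIntegral_congr_fun measurableSet_Ioi hintegrand,
    lintegral_const_mul' _ _ ENNReal.ofReal_ne_top,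
    lintegral_Ioi_pow_mul_exp_neg_sq_div_two _ hx,
    ← ENNReal.ofReal_mul (qval_nonneg w), ← ENNReal.ofReal_mul hK]
  ring_nf

end SingularValues

theorem rankOne_apply {d : ℕ} {n : Fin d → ℕ} (u : ∀ k, EuclideanSpace ℝ (Fin (n k)))
    (i : ∀ k, Fin (n k)) : rankOne u i = ∏ k, u k (i k) :=
  rfl

theorem norm_rankOne {d : ℕ} {n : Fin d → ℕ} (u : ∀ k, EuclideanSpace ℝ (Fin (n k))) :
    ‖rankOne u‖ = ∏ k, ‖u k‖ := by
  have hsq : ‖rankOne u‖ ^ 2 = (∏ k, ‖u k‖) ^ 2 := by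
    simp only [EuclideanSpace.norm_sq_eq, Real.norm_eq_abs, sq_abs, ← Finset.prod_pow,
      rankOne_apply]
    exact (Fintype.prod_sum fun k j => u k j ^ 2).symm
  exact (pow_left_inj₀ (norm_nonneg _) (Finset.prod_nonneg fun k _ => norm_nonneg _)
    two_ne_zero).mp hsq

theorem famC_mul_mul {d : ℕ} {n : Fin d → ℕ} (u v : ∀ k, EuclideanSpace ℝ (Fin (n k)))
    (U V : ∀ k, Fin (n k - 1) → EuclideanSpace ℝ (Fin (n k)))
    (P : EuclideanSpace ℝ (∀ k, Fin (n k)) →ₗ[ℝ] EuclideanSpace ℝ (∀ k, Fin (n k)))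
    (r s t : ℝ) : famC u v U V P (r * s) (r * t) = r • famC u v U V P s t := by
  funext i
  cases i <;> simp [famC, mul_smul]

theorem continuous_famC {d : ℕ} {n : Fin d → ℕ} (u v : ∀ k, EuclideanSpace ℝ (Fin (n k)))
    (U V : ∀ k, Fin (n k - 1) → EuclideanSpace ℝ (Fin (n k)))
    (P : EuclideanSpace ℝ (∀ k, Fin (n k)) →ₗ[ℝ] EuclideanSpace ℝ (∀ k, Fin (n k))) :
    Continuous fun p : ℝ × ℝ => famC u v U V P p.1 p.2 :=
  continuous_pi fun i => i.casesOn (fun _ => continuous_fst.smul continuous_const)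
    (fun _ => continuous_snd.smul continuous_const)

theorem famC_integral_identity_general (d : ℕ) (hd : 3 ≤ d) (n : Fin d → ℕ) (hn : ∀ k, 2 ≤ n k)
    (u v : ∀ k, EuclideanSpace ℝ (Fin (n k)))
    (U V : ∀ k, Fin (n k - 1) → EuclideanSpace ℝ (Fin (n k)))
    (hu : ∀ k, ‖u k‖ = 1) (hv : ∀ k, ‖v k‖ = 1)
    (hUV : rankOne u ≠ -rankOne v)
    (P : EuclideanSpace ℝ (∀ k, Fin (n k)) →ₗ[ℝ] EuclideanSpace ℝ (∀ k, Fin (n k))) :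
    (∫⁻ l in Set.Ioi (0 : ℝ), ∫⁻ m in Set.Ioi (0 : ℝ),
        ENNReal.ofReal (qval (famC u v U V P l m) *
          Real.exp (-‖l • rankOne u + m • rankOne v‖ ^ 2 / 2)))
      = ENNReal.ofReal ((2 : ℝ) ^ ((2 * ((1 + ∑ k, (n k - 1) : ℕ) : ℝ) - 3) / 2) *
          Real.Gamma ((2 * ((1 + ∑ k, (n k - 1) : ℕ) : ℝ) - 1) / 2)) *
        ∫⁻ θ in Set.Ioc (0 : ℝ) (π / 2),
          ENNReal.ofReal (qval (famC u v U V P (Real.cos θ) (Real.sin θ)) /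
            ‖Real.cos θ • rankOne u + Real.sin θ • rankOne v‖ ^
              (2 * (1 + ∑ k, (n k - 1)) - 1)) := by
  have hd0 : 0 < d := by omega
  have : Nonempty ((Σ k : Fin d, Fin (n k - 1)) ⊕ (Σ k : Fin d, Fin (n k - 1))) :=
    ⟨.inl ⟨⟨0, hd0⟩, ⟨0, by have := hn ⟨0, hd0⟩; omega⟩⟩⟩
  have hcard : Fintype.card ((Σ k : Fin d, Fin (n k - 1)) ⊕ (Σ k : Fin d, Fin (n k - 1))) =
      2 * ∑ k, (n k - 1) := by
    simp [Fintype.card_sum, Fintype.card_sigma, two_mul]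
  have hmeas : Measurable fun p : ℝ × ℝ => ENNReal.ofReal (qval (famC u v U V P p.1 p.2) *
      exp (-‖p.1 • rankOne u + p.2 • rankOne v‖ ^ 2 / 2)) :=
    ((continuous_famC u v U V P).measurable_qval_comp.mul
      (by fun_prop : Continuous _).measurable).ennreal_ofReal
  have hne : ∀ θ ∈ Ioo (0 : ℝ) (π / 2), cos θ • rankOne u + sin θ • rankOne v ≠ 0 :=
    fun θ ⟨hθ₀, hθ₁⟩ => smul_add_smul_ne_zero_of_norm_eq_s10 (by simp [norm_rankOne, hu, hv]) hUV
      (cos_pos_of_mem_Ioo ⟨by linarith, hθ₁⟩) (sin_pos_of_pos_of_lt_pi hθ₀ (by linarith))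
  rw [lintegral_Ioi_lintegral_Ioi_eq_polar _ hmeas, ← setLIntegral_congr Ioo_ae_eq_Ioc,
    ← lintegral_const_mul' _ _ ENNReal.ofReal_ne_top]
  refine setLIntegral_congr_fun measurableSet_Ioo fun θ hθ => ?_
  simp only [famC_mul_mul, mul_smul, ← smul_add]
  rw [lintegral_Ioi_mul_qval_smul_mul_exp _ (hne θ hθ), hcard]
  congr 4
  · push_cast; ring
  · push_cast; ring
  · omega

/-- Lemma 5.3 of the paper: with `P` the orthogonal projection onto `span{𝒰, 𝒱}`,
`∫_0^∞ ∫_0^∞ q(C(λ, μ)) e^{-‖λ𝒰 + μ𝒱‖²/2} dλ dμ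
  = 2^{(2Σ-3)/2} Γ((2Σ-1)/2) ∫_0^{π/2} q(C(cos θ, sin θ)) / ‖cos θ 𝒰 + sin θ 𝒱‖^{2Σ-1} dθ`. -/
theorem famC_integral_identity (d : ℕ) (hd : 3 ≤ d) (n : Fin d → ℕ) (hn : ∀ k, 2 ≤ n k)
    (u v : ∀ k, EuclideanSpace ℝ (Fin (n k)))
    (U V : ∀ k, Fin (n k - 1) → EuclideanSpace ℝ (Fin (n k)))
    (hu : ∀ k, ‖u k‖ = 1) (hv : ∀ k, ‖v k‖ = 1)
    (hUon : ∀ k, Orthonormal ℝ (U k)) (hUperp : ∀ k j, ⟪u k, U k j⟫ = 0)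
    (hVon : ∀ k, Orthonormal ℝ (V k)) (hVperp : ∀ k j, ⟪v k, V k j⟫ = 0)
    (hUV : rankOne u ≠ -rankOne v)
    (P : EuclideanSpace ℝ (∀ k, Fin (n k)) →ₗ[ℝ] EuclideanSpace ℝ (∀ k, Fin (n k)))
    (hP1 : ∀ x, P x ∈ Submodule.span ℝ ({rankOne u, rankOne v} :
      Set (EuclideanSpace ℝ (∀ k, Fin (n k)))))
    (hP2 : ∀ x ∈ Submodule.span ℝ ({rankOne u, rankOne v} :
      Set (EuclideanSpace ℝ (∀ k, Fin (n k)))), P x = x)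
    (hP3 : ∀ x y, ⟪P x, y⟫ = ⟪x, P y⟫) :
    (∫⁻ l in Set.Ioi (0 : ℝ), ∫⁻ m in Set.Ioi (0 : ℝ),
        ENNReal.ofReal (qval (famC u v U V P l m) *
          Real.exp (-‖l • rankOne u + m • rankOne v‖ ^ 2 / 2)))
      = ENNReal.ofReal ((2 : ℝ) ^ ((2 * ((1 + ∑ k, (n k - 1) : ℕ) : ℝ) - 3) / 2) *
          Real.Gamma ((2 * ((1 + ∑ k, (n k - 1) : ℕ) : ℝ) - 1) / 2)) *
        ∫⁻ θ in Set.Ioc (0 : ℝ) (π / 2),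
          ENNReal.ofReal (qval (famC u v U V P (Real.cos θ) (Real.sin θ)) /
            ‖Real.cos θ • rankOne u + Real.sin θ • rankOne v‖ ^
              (2 * (1 + ∑ k, (n k - 1)) - 1)) :=
  famC_integral_identity_general d hd n hn u v U V hu hv hUV P
end

section
/- Let d ≥ 1 and let n₁, …, n_d ≥ 2 be integers; set Σ := 1 + ∑_{k=1}^d (n_k − 1). Then the integral ∫_{(0,π/2)^d} ( ∏_{k=1}^d sin(θ_k)^{n_k − 2} ) / ( 1 − ∏_{k=1}^d cos(θ_k) )^{(Σ−2)/2} dθ_1 ⋯ dθ_d is finite. -/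
open MeasureTheory Real

/-- Finiteness of the integral
`∫_{(0,π/2)^d} (∏_k sin(θ_k)^{n_k - 2}) / (1 - ∏_k cos(θ_k))^{(Σ-2)/2} dθ`,
where `Σ = 1 + ∑_k (n_k - 1)`. -/
theorem lintegral_sin_div_one_sub_prod_cos_lt_top (d : ℕ) (hd : 1 ≤ d)
    (n : Fin d → ℕ) (hn : ∀ k, 2 ≤ n k) :
    (∫⁻ θ : Fin d → ℝ in Set.univ.pi (fun _ => Set.Ioo (0 : ℝ) (π / 2)),
      ENNReal.ofReal ((∏ k, Real.sin (θ k) ^ (n k - 2)) /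
        (1 - ∏ k, Real.cos (θ k)) ^
          (((1 + ∑ k, ((n k : ℝ) - 1)) - 2) / 2))) < ⊤ := by
  have hπ : (0:ℝ) < π := pi_pos
  set S : ℝ := 1 + ∑ k, ((n k : ℝ) - 1) with hSdef
  set e : ℝ := (S - 2) / 2 with hedef
  have hd' : (1:ℝ) ≤ d := by exact_mod_cast hd
  have hterm : ∀ k : Fin d, (1:ℝ) ≤ (n k : ℝ) - 1 := fun k => by
    have h2 : (2:ℝ) ≤ (n k : ℝ) := by exact_mod_cast hn k
    linarith
  have hsum1 : ∑ k, ((n k : ℝ) - 1) = S - 1 := by rw [hSdef]; ring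
  have hSd : (d:ℝ) ≤ S - 1 := by
    have h := Finset.sum_le_sum (fun k (_ : k ∈ Finset.univ) => hterm k)
    rw [hsum1] at h
    simpa using h
  have hS1 : (0:ℝ) < S - 1 := by linarith
  have hS2 : (0:ℝ) ≤ S - 2 := by linarith
  have he0 : (0:ℝ) ≤ e := by rw [hedef]; linarith
  have he2 : 2 * e = S - 2 := by rw [hedef]; ring
  set w : Fin d → ℝ := fun k => ((n k : ℝ) - 1) / (S - 1) with hwdef
  have hw0 : ∀ k, 0 ≤ w k := fun k => div_nonneg (by linarith [hterm k]) hS1.le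
  have hwsum : ∑ k, w k = 1 := by
    rw [hwdef, ← Finset.sum_div, hsum1, div_self hS1.ne']
  set c : Fin d → ℝ := fun k => ((n k : ℝ) - 2) - 2 * e * w k with hcdef
  have hc : ∀ k, -1 < c k := by
    intro k
    have h1 : 2 * e * w k < (n k : ℝ) - 1 := by
      rw [he2, hwdef]
      rw [mul_div_assoc', div_lt_iff₀ hS1]
      nlinarith [hterm k]
    have : c k = ((n k : ℝ) - 2) - 2 * e * w k := rfl
    linarith
  set g : Fin d → ℝ → ℝ := fun k => (Set.Ioo (0:ℝ) (π/2)).indicator (fun x => x ^ (c k))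
    with hgdef
  have hg : ∀ k, Integrable (g k) := by
    intro k
    rw [hgdef]
    rw [integrable_indicator_iff measurableSet_Ioo]
    exact (intervalIntegral.integrableOn_Ioo_rpow_iff (by positivity)).2 (hc k)
  set G : (Fin d → ℝ) → ℝ := fun θ => ∏ k, g k (θ k) with hGdef
  have hG : Integrable G := Integrable.fintype_prod (𝕜 := ℝ) hg
  set C : ℝ := (π^2/2) ^ e with hCdef
  have hC0 : (0:ℝ) ≤ C := Real.rpow_nonneg (by positivity) _
  -- the key pointwise bound
  have key : ∀ θ ∈ Set.univ.pi (fun _ : Fin d => Set.Ioo (0 : ℝ) (π / 2)),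
      ENNReal.ofReal ((∏ k, Real.sin (θ k) ^ (n k - 2)) /
        (1 - ∏ k, Real.cos (θ k)) ^ ((S - 2) / 2))
        ≤ ENNReal.ofReal C * ENNReal.ofReal (G θ) := by
    intro θ hθ
    have hθk : ∀ k, θ k ∈ Set.Ioo (0:ℝ) (π/2) := fun k => hθ k (Set.mem_univ k)
    have hθpos : ∀ k, 0 < θ k := fun k => (hθk k).1
    set P : ℝ := ∏ k, Real.cos (θ k) with hPdef
    have hcos0 : ∀ k, 0 ≤ Real.cos (θ k) := fun k =>
      Real.cos_nonneg_of_mem_Icc ⟨by linarith [hθpos k], (hθk k).2.le⟩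
    have hP_le : ∀ j, P ≤ Real.cos (θ j) := by
      intro j
      calc P = Real.cos (θ j) * ∏ k ∈ Finset.univ.erase j, Real.cos (θ k) :=
          (Finset.mul_prod_erase _ _ (Finset.mem_univ j)).symm
        _ ≤ Real.cos (θ j) * 1 :=
            mul_le_mul_of_nonneg_left
              (Finset.prod_le_one (fun k _ => hcos0 k) (fun k _ => Real.cos_le_one _)) (hcos0 j)
        _ = Real.cos (θ j) := mul_one _
    have step2 : P ≤ ∑ k, w k * Real.cos (θ k) := by
      calc P = ∑ k, w k * P := by rw [← Finset.sum_mul, hwsum, one_mul]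
        _ ≤ ∑ k, w k * Real.cos (θ k) :=
            Finset.sum_le_sum fun k _ => mul_le_mul_of_nonneg_left (hP_le k) (hw0 k)
    have step3 : (2/π^2) * ∑ k, w k * (θ k)^2 ≤ 1 - P := by
      have h1 : ∀ k, 2/π^2 * (θ k)^2 ≤ 1 - Real.cos (θ k) := fun k => by
        have habs : |θ k| ≤ π := by
          rw [abs_of_pos (hθpos k)]; linarith [(hθk k).2]
        have := Real.cos_le_one_sub_mul_cos_sq habs
        linarith
      have h2 : ∑ k, w k * (1 - Real.cos (θ k)) = 1 - ∑ k, w k * Real.cos (θ k) := by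
        simp only [mul_sub, mul_one, Finset.sum_sub_distrib, hwsum]
      calc (2/π^2) * ∑ k, w k * (θ k)^2 = ∑ k, w k * (2/π^2 * (θ k)^2) := by
            rw [Finset.mul_sum]; exact Finset.sum_congr rfl fun k _ => by ring
        _ ≤ ∑ k, w k * (1 - Real.cos (θ k)) :=
            Finset.sum_le_sum fun k _ => mul_le_mul_of_nonneg_left (h1 k) (hw0 k)
        _ = 1 - ∑ k, w k * Real.cos (θ k) := h2
        _ ≤ 1 - P := by linarith [step2]
    have step4 : ∏ k, (θ k) ^ (2 * w k) ≤ ∑ k, w k * (θ k)^2 := by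
      have hAM := Real.geom_mean_le_arith_mean_weighted Finset.univ w (fun k => (θ k)^2)
        (fun k _ => hw0 k) hwsum (fun k _ => sq_nonneg _)
      have heq : ∀ k, ((θ k)^2) ^ (w k) = (θ k) ^ (2 * w k) := fun k => by
        rw [← Real.rpow_natCast (θ k) 2, ← Real.rpow_mul (hθpos k).le]
        norm_num
      calc ∏ k, (θ k) ^ (2 * w k) = ∏ k, ((θ k)^2) ^ (w k) := by
            exact Finset.prod_congr rfl fun k _ => (heq k).symm
        _ ≤ ∑ k, w k * (θ k)^2 := hAM
    have step5 : (2/π^2) * ∏ k, (θ k) ^ (2 * w k) ≤ 1 - P :=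
      le_trans (mul_le_mul_of_nonneg_left step4 (by positivity)) step3
    set D : ℝ := (2/π^2)^e * ∏ k, (θ k) ^ (2 * e * w k) with hDdef
    have h2π : (0:ℝ) < 2/π^2 := by positivity
    have hD0 : (0:ℝ) < D := by
      apply mul_pos (Real.rpow_pos_of_pos h2π _)
      exact Finset.prod_pos fun k _ => Real.rpow_pos_of_pos (hθpos k) _
    have hD : D ≤ (1 - P) ^ e := by
      have h := Real.rpow_le_rpow (mul_nonneg h2π.le
        (Finset.prod_nonneg fun k _ => (Real.rpow_pos_of_pos (hθpos k) _).le)) step5 he0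
      have hrw : ((2/π^2) * ∏ k, (θ k) ^ (2 * w k)) ^ e = D := by
        rw [Real.mul_rpow h2π.le
          (Finset.prod_nonneg fun k _ => Real.rpow_nonneg (hθpos k).le _)]
        rw [hDdef]
        congr 1
        rw [← Real.finset_prod_rpow _ _ (fun k _ => Real.rpow_nonneg (hθpos k).le _)]
        exact Finset.prod_congr rfl fun k _ => by
          rw [← Real.rpow_mul (hθpos k).le, show 2 * w k * e = 2 * e * w k from by ring]
      rwa [hrw] at h
    have hnum : ∏ k, Real.sin (θ k) ^ (n k - 2) ≤ ∏ k, (θ k) ^ (n k - 2) := by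
      refine Finset.prod_le_prod (fun k _ => pow_nonneg ?_ _) (fun k _ => ?_)
      · exact Real.sin_nonneg_of_nonneg_of_le_pi (hθpos k).le (by linarith [(hθk k).2])
      · exact pow_le_pow_left₀
          (Real.sin_nonneg_of_nonneg_of_le_pi (hθpos k).le (by linarith [(hθk k).2]))
          (Real.sin_le (hθpos k).le) _
    have hnat : ∀ k, (θ k) ^ (n k - 2) = (θ k) ^ ((n k : ℝ) - 2) := fun k => by
      rw [← Real.rpow_natCast (θ k) (n k - 2), Nat.cast_sub (hn k)]
      norm_num
    have hmain : (∏ k, Real.sin (θ k) ^ (n k - 2)) / (1 - P) ^ e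
        ≤ C * ∏ k, (θ k) ^ (c k) := by
      have h1 : (∏ k, Real.sin (θ k) ^ (n k - 2)) / (1 - P) ^ e
          ≤ (∏ k, (θ k) ^ (n k - 2)) / D :=
        div_le_div₀ (Finset.prod_nonneg fun k _ => pow_nonneg (hθpos k).le _) hnum hD0 hD
      refine h1.trans_eq ?_
      rw [div_eq_iff hD0.ne']
      have hsplit : C * (∏ k, (θ k) ^ (c k)) * D
          = (C * (2/π^2)^e) * ∏ k, ((θ k) ^ (c k) * (θ k) ^ (2 * e * w k)) := by
        rw [hDdef, Finset.prod_mul_distrib]; ring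
      rw [hsplit]
      have hCc : C * (2/π^2)^e = 1 := by
        rw [hCdef, ← Real.mul_rpow (by positivity) (by positivity)]
        rw [show (π^2/2) * (2/π^2) = 1 by field_simp]
        exact Real.one_rpow _
      rw [hCc, one_mul]
      refine Finset.prod_congr rfl fun k _ => ?_
      rw [← Real.rpow_add (hθpos k), hnat k]
      congr 1
      simp only [hcdef]
      ring
    have hGθ : G θ = ∏ k, (θ k) ^ (c k) := by
      rw [hGdef]
      exact Finset.prod_congr rfl fun k _ => Set.indicator_of_mem (hθk k) _
    calc ENNReal.ofReal ((∏ k, Real.sin (θ k) ^ (n k - 2)) / (1 - P) ^ ((S - 2) / 2))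
        ≤ ENNReal.ofReal (C * ∏ k, (θ k) ^ (c k)) := by
          apply ENNReal.ofReal_le_ofReal
          rw [← hedef] at *
          exact hmain
      _ = ENNReal.ofReal C * ENNReal.ofReal (G θ) := by
          rw [hGθ, ENNReal.ofReal_mul hC0]
  -- put everything together
  have hSmeas : MeasurableSet (Set.univ.pi (fun _ : Fin d => Set.Ioo (0 : ℝ) (π / 2))) :=
    MeasurableSet.univ_pi fun _ => measurableSet_Ioo
  calc (∫⁻ θ : Fin d → ℝ in Set.univ.pi (fun _ => Set.Ioo (0 : ℝ) (π / 2)),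
      ENNReal.ofReal ((∏ k, Real.sin (θ k) ^ (n k - 2)) /
        (1 - ∏ k, Real.cos (θ k)) ^ ((S - 2) / 2)))
      ≤ ∫⁻ θ : Fin d → ℝ in Set.univ.pi (fun _ => Set.Ioo (0 : ℝ) (π / 2)),
          ENNReal.ofReal C * ENNReal.ofReal (G θ) := by
        refine lintegral_mono_ae ((ae_restrict_iff' hSmeas).2 (ae_of_all _ ?_))
        exact key
    _ ≤ ∫⁻ θ, ENNReal.ofReal C * ENNReal.ofReal (G θ) := setLIntegral_le_lintegral _ _
    _ = ENNReal.ofReal C * ∫⁻ θ, ENNReal.ofReal (G θ) :=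
        lintegral_const_mul' _ _ ENNReal.ofReal_ne_top
    _ ≤ ENNReal.ofReal C * ∫⁻ θ, (‖G θ‖₊ : ENNReal) := by
        gcongr with θ
        exact Real.ofReal_le_enorm _
    _ < ⊤ := ENNReal.mul_lt_top ENNReal.ofReal_lt_top hG.hasFiniteIntegral
end

section
/- For every integer d ≥ 1 there exists a constant c > 0, depending only on d, such that for all real numbers ε_1, …, ε_d with 0 ≤ ε_k ≤ ε_1 ≤ 1 for every k and ε_1 > 0: ∑_{k=1}^d ε_k² ≥ (2 − c·ε_1²) · ( ∏_{k=1}^d √(1 + ε_k²) − 1 ). Equivalently, (∑_{k=1}^d ε_k²) / (∏_{k=1}^d √(1 + ε_k²) − 1) ≥ 2 − c·ε_1². -/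
/-- Elementary bound: for `x ≥ 0`, `exp x - 1 ≤ x + x ^ 2 * exp x`. -/
lemma exp_sub_one_le_aux {x : ℝ} (hx : 0 ≤ x) :
    Real.exp x - 1 ≤ x + x ^ 2 * Real.exp x := by
  have h1 : -x + 1 ≤ Real.exp (-x) := Real.add_one_le_exp (-x)
  have hmul : Real.exp (-x) * Real.exp x = 1 := by
    rw [← Real.exp_add]; simp
  have hp : 0 < Real.exp x := Real.exp_pos x
  nlinarith [mul_le_mul_of_nonneg_right h1 hp.le, sq_nonneg x]

/-- The key estimate from the proof of Lemma 5.4: for every `d ≥ 1` there is a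
constant `c > 0`, depending only on `d`, such that whenever
`0 ≤ ε_k ≤ ε_1 ≤ 1` for all `k` and `ε_1 > 0`,
`∑_k ε_k² ≥ (2 - c ε_1²) (∏_k √(1 + ε_k²) - 1)`. -/
theorem sum_sq_ge_prod_sqrt_bound (d : ℕ) (hd : 1 ≤ d) :
    ∃ c > (0 : ℝ), ∀ ε : Fin d → ℝ,
      (∀ k, 0 ≤ ε k) → (∀ k, ε k ≤ ε ⟨0, hd⟩) → ε ⟨0, hd⟩ ≤ 1 → 0 < ε ⟨0, hd⟩ →
      (2 - c * ε ⟨0, hd⟩ ^ 2) * ((∏ k, Real.sqrt (1 + ε k ^ 2)) - 1) ≤ ∑ k, ε k ^ 2 := by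
  set K := Real.exp ((d : ℝ) / 2) with hKdef
  have hK0 : 0 < K := Real.exp_pos _
  refine ⟨d * K, by positivity, ?_⟩
  intro ε h0 h1 hle hpos
  set e1 := ε ⟨0, hd⟩ with he1
  set S := ∑ k, ε k ^ 2 with hSdef
  set P := ∏ k, Real.sqrt (1 + ε k ^ 2) with hPdef
  have hS0 : 0 ≤ S := Finset.sum_nonneg fun k _ => sq_nonneg _
  have hP1 : 1 ≤ P := by
    have h := Finset.prod_le_prod (s := Finset.univ) (f := fun _ : Fin d => (1 : ℝ))
      (g := fun k => Real.sqrt (1 + ε k ^ 2)) (fun _ _ => zero_le_one)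
      (fun k _ => Real.one_le_sqrt.mpr (by nlinarith [sq_nonneg (ε k)]))
    simpa using h
  have hSle : S ≤ d * e1 ^ 2 := by
    calc S ≤ ∑ _k : Fin d, e1 ^ 2 := Finset.sum_le_sum fun k _ => by
            have := h1 k; have := h0 k; nlinarith
      _ = d * e1 ^ 2 := by simp [Finset.sum_const, mul_comm]
  have he1sq : e1 ^ 2 ≤ 1 := by nlinarith
  have hSd : S ≤ (d : ℝ) := by
    nlinarith [Nat.cast_nonneg (α := ℝ) d, mul_le_mul_of_nonneg_left he1sq (Nat.cast_nonneg (α := ℝ) d)]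
  -- P ≤ exp (S/2)
  have hPexp : P ≤ Real.exp (S / 2) := by
    have h2 : P ≤ ∏ k, Real.exp (ε k ^ 2 / 2) := by
      refine Finset.prod_le_prod (fun k _ => Real.sqrt_nonneg _) (fun k _ => ?_)
      rw [Real.exp_half]
      exact Real.sqrt_le_sqrt (by linarith [Real.add_one_le_exp (ε k ^ 2)])
    calc P ≤ ∏ k, Real.exp (ε k ^ 2 / 2) := h2
      _ = Real.exp (∑ k, ε k ^ 2 / 2) := (Real.exp_sum _ _).symm
      _ = Real.exp (S / 2) := by rw [hSdef, Finset.sum_div]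
  have hexpK : Real.exp (S / 2) ≤ K := Real.exp_le_exp.mpr (by linarith)
  have hkey : P - 1 ≤ S / 2 + (S / 2) ^ 2 * K := by
    have := exp_sub_one_le_aux (x := S / 2) (by linarith)
    nlinarith [sq_nonneg (S / 2)]
  -- conclude
  rcases le_or_gt (2 - ↑d * K * e1 ^ 2) 0 with ht | ht
  · have : (2 - ↑d * K * e1 ^ 2) * (P - 1) ≤ 0 :=
      mul_nonpos_of_nonpos_of_nonneg ht (by linarith)
    linarith
  · have h3 : (2 - ↑d * K * e1 ^ 2) * (P - 1) ≤
        (2 - ↑d * K * e1 ^ 2) * (S / 2 + (S / 2) ^ 2 * K) :=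
      mul_le_mul_of_nonneg_left hkey ht.le
    have h4 : (2 - ↑d * K * e1 ^ 2) * (S / 2 + (S / 2) ^ 2 * K) ≤ S := by
      nlinarith [sq_nonneg e1, mul_nonneg hS0 hK0.le,
        mul_nonneg (mul_nonneg hS0 hS0) hK0.le,
        mul_le_mul_of_nonneg_right hSle (mul_nonneg hS0 hK0.le)]
    linarith
end
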